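/- arXiv:1410.8370 — 6 statements merged into one kernel-verified Lean document; each statement's English description precedes it below -/
import Mathlib

section
/- Let $X$ be a topological vector space, $C \subseteq X$ a nonempty bounded convex set, and $f : C \to C$ an affine map. Then there exists a sequence $(x_n)$ in $C$ such that $x_n - f(x_n) \to 0$. -/
/-!
Average the orbit `x, f x, f² x, …` of a point of `C`: the Cesàro means `xₙ` lie in `C` by
convexity, and since `f` is affine, `f xₙ` is the mean of the shifted orbit. The difference
`xₙ - f xₙ` therefore telescopes to `(x - fⁿ⁺¹ x) / (n + 1)`, an element of the bounded set
`C - C` scaled by a factor tending to `0`, so it tends to `0`.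
-/

open Finset Filter Topology

section IsAffineOn

variable {𝕜 E F ι : Type*} [Field 𝕜] [LinearOrder 𝕜] [IsStrictOrderedRing 𝕜]
  [AddCommGroup E] [Module 𝕜 E] [AddCommGroup F] [Module 𝕜 F]

variable (𝕜) in
def IsAffineOn (f : E → F) (C : Set E) : Prop :=
  ∀ x ∈ C, ∀ y ∈ C, ∀ t ∈ Set.Icc (0 : 𝕜) 1, f (t • x + (1 - t) • y) = t • f x + (1 - t) • f y

theorem IsAffineOn.map_centerMass {f : E → F} {C : Set E} (hf : IsAffineOn 𝕜 f C)
    (hC : Convex 𝕜 C) {s : Finset ι} (hs : s.Nonempty) {w : ι → 𝕜} {z : ι → E}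
    (hw : ∀ i ∈ s, 0 < w i) (hz : ∀ i ∈ s, z i ∈ C) :
    f (s.centerMass w z) = s.centerMass w (f ∘ z) := by
  classical
  induction hs using Finset.Nonempty.cons_induction with
  | singleton i =>
    have hwi := (hw i (mem_singleton_self i)).ne'
    rw [centerMass_singleton _ _ hwi, centerMass_singleton _ _ hwi, Function.comp_apply]
  | cons i s hi hs ih =>
    simp only [cons_eq_insert, mem_insert, forall_eq_or_imp] at hw hz ⊢
    have hsum : 0 < ∑ j ∈ s, w j := sum_pos (fun j hj => hw.2 j hj) hs
    set t := w i / (w i + ∑ j ∈ s, w j)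
    have ht : t ∈ Set.Icc (0 : 𝕜) 1 :=
      ⟨div_nonneg hw.1.le (by linarith [hw.1]), (div_le_one (by linarith [hw.1])).2 (by linarith)⟩
    have hrest : (∑ j ∈ s, w j) / (w i + ∑ j ∈ s, w j) = 1 - t := by
      rw [eq_sub_iff_add_eq, ← add_div, add_comm, div_self (by linarith [hw.1])]
    rw [centerMass_insert _ _ _ hi hsum.ne', centerMass_insert _ _ _ hi hsum.ne', hrest,
      hf _ hz.1 _ (hC.centerMass_mem (fun j hj => (hw.2 j hj).le) hsum hz.2) t ht,
      ih hw.2 hz.2, Function.comp_apply]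

end IsAffineOn

section CesaroMean

variable {E : Type*} [AddCommGroup E] [Module ℝ E]

noncomputable def cesaroMean (g : ℕ → E) (n : ℕ) : E :=
  (range (n + 1)).centerMass (fun _ => (1 : ℝ)) g

theorem Convex.cesaroMean_mem {C : Set E} (hC : Convex ℝ C) {g : ℕ → E} (hg : ∀ k, g k ∈ C)
    (n : ℕ) : cesaroMean g n ∈ C :=
  hC.centerMass_mem (fun _ _ => zero_le_one)
    (by simp only [sum_const, card_range, nsmul_eq_mul, mul_one]; positivity) (fun k _ => hg k)

theorem IsAffineOn.map_cesaroMean {F : Type*} [AddCommGroup F] [Module ℝ F] {f : E → F}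
    {C : Set E} (hf : IsAffineOn ℝ f C) (hC : Convex ℝ C) {g : ℕ → E}
    (hg : ∀ k, g k ∈ C) (n : ℕ) : f (cesaroMean g n) = cesaroMean (f ∘ g) n :=
  hf.map_centerMass hC nonempty_range_add_one (fun _ _ => zero_lt_one) (fun k _ => hg k)

theorem cesaroMean_sub_cesaroMean_succ (g : ℕ → E) (n : ℕ) :
    cesaroMean g n - cesaroMean (fun k => g (k + 1)) n = ((n : ℝ) + 1)⁻¹ • (g 0 - g (n + 1)) := by
  simp only [cesaroMean, centerMass, one_smul, sum_const, card_range, nsmul_eq_mul, mul_one,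
    Nat.cast_add, Nat.cast_one, ← smul_sub, ← sum_sub_distrib, sum_range_sub']

theorem Bornology.IsVonNBounded.tendsto_cesaroMean_sub_cesaroMean_succ [TopologicalSpace E]
    [IsTopologicalAddGroup E] {B : Set E} (hB : IsVonNBounded ℝ B) {g : ℕ → E}
    (hg : ∀ k, g k ∈ B) :
    Tendsto (fun n => cesaroMean g n - cesaroMean (fun k => g (k + 1)) n) atTop (𝓝 0) := by
  simp only [cesaroMean_sub_cesaroMean_succ]
  exact (hB.sub hB).smul_tendsto_zero
    (Eventually.of_forall fun n => Set.sub_mem_sub (hg 0) (hg (n + 1)))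
    (by simpa [one_div] using tendsto_one_div_add_atTop_nhds_zero_nat (𝕜 := ℝ))

end CesaroMean

theorem stmt0_general {X : Type*} [AddCommGroup X] [Module ℝ X] [TopologicalSpace X]
    [IsTopologicalAddGroup X]
    (C : Set X) (hne : C.Nonempty) (hconv : Convex ℝ C)
    (hbdd : Bornology.IsVonNBounded ℝ C)
    (f : X → X) (hmaps : Set.MapsTo f C C)
    (haff : ∀ x ∈ C, ∀ y ∈ C, ∀ t : ℝ, t ∈ Set.Icc (0:ℝ) 1 →
      f (t • x + (1 - t) • y) = t • f x + (1 - t) • f y) :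
    ∃ x : ℕ → X, (∀ n, x n ∈ C) ∧
      Filter.Tendsto (fun n => x n - f (x n)) Filter.atTop (nhds 0) := by
  obtain ⟨x₀, hx₀⟩ := hne
  set orbit : ℕ → X := fun k => f^[k] x₀
  have horbit : ∀ k, orbit k ∈ C := fun k => hmaps.iterate k hx₀
  have hf_orbit : f ∘ orbit = fun k => orbit (k + 1) :=
    funext fun k => (Function.iterate_succ_apply' f k x₀).symm
  refine ⟨cesaroMean orbit, hconv.cesaroMean_mem horbit, ?_⟩
  simp only [IsAffineOn.map_cesaroMean haff hconv horbit, hf_orbit]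
  exact hbdd.tendsto_cesaroMean_sub_cesaroMean_succ horbit

/-- If `C` is a nonempty bounded convex subset of a topological vector space `X` and
`f : C → C` is an affine self-map, then `f` admits an approximate fixed point sequence. -/
theorem stmt0 {X : Type*} [AddCommGroup X] [Module ℝ X] [TopologicalSpace X]
    [IsTopologicalAddGroup X] [ContinuousSMul ℝ X]
    (C : Set X) (hne : C.Nonempty) (hconv : Convex ℝ C)
    (hbdd : Bornology.IsVonNBounded ℝ C)
    (f : X → X) (hmaps : Set.MapsTo f C C)
    (haff : ∀ x ∈ C, ∀ y ∈ C, ∀ t : ℝ, t ∈ Set.Icc (0:ℝ) 1 →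
      f (t • x + (1 - t) • y) = t • f x + (1 - t) • f y) :
    ∃ x : ℕ → X, (∀ n, x n ∈ C) ∧
      Filter.Tendsto (fun n => x n - f (x n)) Filter.atTop (nhds 0) :=
  stmt0_general C hne hconv hbdd f hmaps haff
end

section
/- The free group $\mathbb{F}_2$ on two generators fails Reiter's condition in $\ell^1$: there exist a finite set $F \subseteq \mathbb{F}_2$ and $\varepsilon > 0$ such that for every $f \in \ell^1(\mathbb{F}_2)$ with $f \ge 0$ and $\|f\|_1 = 1$, there is $g \in F$ with $\|g \cdot f - f\|_1 \ge \varepsilon$, where $(g \cdot f)(x) = f(g^{-1}x)$. -/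
/-!
Split `F₂ = ⟨a₀, a₁⟩` according to the first letter of reduced words. Left multiplication by
`aᵢ⁻¹` maps the words starting with `aᵢ` onto the words not starting with `aᵢ⁻¹`, so a
probability `f` that is nearly `aᵢ`-invariant puts mass close to `1` on the union of these two
sets. The four first-letter sets are disjoint, so this cannot happen for both generators:
the two displacements `‖aᵢ • f - f‖₁` add up to at least `1`.
-/

open FreeGroup
open scoped Pointwise

lemma tsum_subtype_sub_tsum_subtype_le {β : Type*} {u v : β → ℝ} (hu : Summable u)
    (hv : Summable v) (s : Set β) :
    ∑' x : s, u x - ∑' x : s, v x ≤ ∑' x, |u x - v x| := by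
  have hd : Summable fun x => |u x - v x| := (hu.sub hv).abs
  calc ∑' x : s, u x - ∑' x : s, v x = ∑' x : s, (u x - v x) :=
        ((hu.subtype s).tsum_sub (hv.subtype s)).symm
    _ ≤ ∑' x : s, |u x - v x| :=
        (hu.subtype s |>.sub (hv.subtype s)).tsum_le_tsum (fun _ => le_abs_self _) (hd.subtype s)
    _ ≤ ∑' x, |u x - v x| := hd.tsum_subtype_le _ s fun _ => abs_nonneg _

lemma tsum_inv_smul_set_sub_tsum_le {G : Type*} [Group G] {f : G → ℝ} (hf : Summable f)
    (g : G) (s : Set G) :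
    ∑' x : ↑(g⁻¹ • s), f x - ∑' x : s, f x ≤ ∑' x, |f (g⁻¹ * x) - f x| := by
  have htranslate : ∑' x : ↑(g⁻¹ • s), f x = ∑' x : s, f (g⁻¹ * x) := by
    rw [← Set.image_smul, tsum_image f (MulAction.injective g⁻¹).injOn]
    rfl
  rw [htranslate]
  exact tsum_subtype_sub_tsum_subtype_le
    ((Equiv.mulLeft g⁻¹).summable_iff.mpr hf) hf s

namespace FreeGroup

variable {α : Type*} [DecidableEq α]

lemma inv_mk_mul_notMem_startsWith {w : α × Bool} {x : FreeGroup α}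
    (hx : x ∈ startsWith w) : (mk [w])⁻¹ * x ∉ startsWith (w.1, !w.2) := by
  obtain ⟨t, ht⟩ : ∃ t, x.toWord = w :: t := by
    simp only [startsWith, Set.mem_ofPred_eq] at hx
    rcases hw : x.toWord with _ | ⟨a, t⟩
    · simp [hw] at hx
    · simp_all
  have hred : IsReduced (w :: t) := ht ▸ isReduced_toWord
  have hmul : (mk [w])⁻¹ * x = mk t := by
    rw [inv_mul_eq_iff_eq_mul, ← mk_toWord (x := x), ht, mul_mk]
    rfl
  rw [hmul]
  rcases t with _ | ⟨b, t⟩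
  · simp [startsWith]
  · rw [isReduced_cons_cons] at hred
    simp only [startsWith, Set.mem_ofPred_eq, toWord_mk, hred.2.reduce_eq]
    intro hb
    simp only [List.getElem?_cons_zero, Option.some.injEq] at hb
    subst hb
    simp at hred

lemma inv_mk_smul_startsWith (w : α × Bool) :
    (mk [w])⁻¹ • startsWith w = (startsWith (w.1, !w.2))ᶜ := by
  ext x
  rw [Set.mem_inv_smul_set_iff, Set.mem_compl_iff, smul_eq_mul]
  refine ⟨fun hx => ?_, startsWith_mk_mul x⟩
  simpa only [inv_mul_cancel_left] using inv_mk_mul_notMem_startsWith hx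

lemma tsum_sub_tsum_startsWith_le {f : FreeGroup α → ℝ} (hf : Summable f) (w : α × Bool) :
    ∑' x, f x - ∑' x : startsWith (w.1, !w.2), f x - ∑' x : startsWith w, f x
      ≤ ∑' x, |f ((mk [w])⁻¹ * x) - f x| := by
  have hcompl := Summable.tsum_add_tsum_compl (s := startsWith (w.1, !w.2)) (hf.subtype _)
    (hf.subtype _)
  have htranslate := tsum_inv_smul_set_sub_tsum_le hf (mk [w]) (startsWith w)
  rw [inv_mk_smul_startsWith] at htranslate
  linarith

lemma sum_tsum_startsWith_le {f : FreeGroup α → ℝ} (hf : Summable f) (hf₀ : ∀ x, 0 ≤ f x)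
    (s : Finset (α × Bool)) :
    ∑ w ∈ s, ∑' x : startsWith w, f x ≤ ∑' x, f x := by
  rw [← Summable.tsum_finset_bUnion_disjoint
    (fun v _ w _ hvw => startsWith.disjoint_iff_ne.mpr hvw) (fun w _ => hf.subtype _)]
  exact hf.tsum_subtype_le _ _ hf₀

lemma card_sub_one_mul_tsum_le_sum_tsum_abs [Fintype α] {f : FreeGroup α → ℝ}
    (hf : Summable f) (hf₀ : ∀ x, 0 ≤ f x) :
    (Fintype.card α - 1) * ∑' x, f x ≤ ∑ a, ∑' x, |f ((of a)⁻¹ * x) - f x| := by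
  have hletter (a : α) : ∑' x, f x - ∑' x : startsWith (a, false), f x
      - ∑' x : startsWith (a, true), f x ≤ ∑' x, |f ((of a)⁻¹ * x) - f x| :=
    tsum_sub_tsum_startsWith_le hf (a, true)
  have hmass := sum_tsum_startsWith_le hf hf₀ Finset.univ
  simp only [Fintype.sum_prod_type, Fintype.sum_bool, Finset.sum_add_distrib] at hmass
  calc (Fintype.card α - 1) * ∑' x, f x
      ≤ ∑ a, (∑' x, f x - ∑' x : startsWith (a, false), f x
          - ∑' x : startsWith (a, true), f x) := by
        simp only [Finset.sum_sub_distrib, Finset.sum_const, Finset.card_univ, nsmul_eq_mul]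
        linarith
    _ ≤ ∑ a, ∑' x, |f ((of a)⁻¹ * x) - f x| := Finset.sum_le_sum fun a _ => hletter a

end FreeGroup

/-- The free group on two generators fails Reiter's condition in `ℓ¹`: there are a finite
set `F ⊆ F₂` and `ε > 0` such that every nonnegative norm-one `f ∈ ℓ¹(F₂)` is moved by
some `g ∈ F` at `ℓ¹`-distance at least `ε`, where `(g • f)(x) = f (g⁻¹ x)`. -/
theorem stmt8 : ∃ (F : Finset (FreeGroup (Fin 2))) (ε : ℝ), 0 < ε ∧
    ∀ f : FreeGroup (Fin 2) → ℝ, (∀ x, 0 ≤ f x) → HasSum f 1 →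
      ∃ g ∈ F, ε ≤ ∑' x, |f (g⁻¹ * x) - f x| := by
  refine ⟨Finset.univ.image of, 1 / 2, by norm_num, fun f hf₀ hf => ?_⟩
  have hsum := card_sub_one_mul_tsum_le_sum_tsum_abs hf.summable hf₀
  rw [hf.tsum_eq] at hsum
  obtain ⟨a, -, ha⟩ := Finset.exists_le_of_sum_le Finset.univ_nonempty
    (f := fun _ => (1 / 2 : ℝ)) (g := fun a => ∑' x, |f ((of a)⁻¹ * x) - f x|)
    (by norm_num at hsum ⊢; linarith)
  exact ⟨of a, Finset.mem_image_of_mem _ (Finset.mem_univ a), ha⟩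
end

section
/- There is no sequence (or net) $(x_i)$ in $\mathrm{prob}(\mathbb{N})$ such that $x_i - \sigma \cdot x_i \to 0$ in $\ell^1$-norm for every $\sigma \in S_\infty$; that is, the canonical affine action of $S_\infty$ on $\mathrm{prob}(\mathbb{N}) \subseteq \ell^1(\mathbb{N})$ admits no approximate fixed point net. -/
/-!
For `x ∈ ℓ¹(ℕ)` and `s ⊆ ℕ`, the mass `m(s) = ∑_{n ∈ s} x n` changes by at most
`‖x - π • x‖` when `s` is replaced by `π⁻¹ s`. Three permutations pull the evens `E` back to
`4ℕ`, the odds `O` back to `4ℕ + 2`, and `E` back to `O`: a paradoxical decomposition of `ℕ`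
playing the role of the failure of Reiter's condition for `𝔽₂`. For an almost invariant `x`,
the first two give `m(E) + m(O) ≈ m(4ℕ) + m(4ℕ + 2) = m(E)`, so `m(O) ≈ 0`, and the third gives
`m(E) ≈ m(O)`; hence the total mass `m(ℕ)` is small, which is impossible for a probability vector.
-/

universe u

/-- The set of probability densities in `ℓ¹(ℕ)`. -/
def probSet : Set (lp (fun _ : ℕ => ℝ) 1) :=
  {b | (∀ n, 0 ≤ b n) ∧ ∑' n, b n = 1}

/-- The canonical action of `S_∞ = Perm ℕ` on `ℓ¹(ℕ)` by permuting coordinates. -/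
def permSmul (σ : Equiv.Perm ℕ) (x : lp (fun _ : ℕ => ℝ) 1) : lp (fun _ : ℕ => ℝ) 1 :=
  ⟨fun n => x (σ⁻¹ n), by
    apply memℓp_gen
    have hx : Summable fun n => ‖x n‖ ^ (1 : ENNReal).toReal :=
      (memℓp_gen_iff (by norm_num)).1 (lp.memℓp x)
    exact ((σ⁻¹ : ℕ ≃ ℕ).summable_iff
      (f := fun n => ‖x n‖ ^ (1 : ENNReal).toReal)).2 hx⟩

open scoped lp

section Mass

variable {α : Type*}

noncomputable def mass (x : ℓ¹(α, ℝ)) (s : Set α) : ℝ :=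
  ∑' a, s.indicator x a

lemma summable_norm_of_lp_one (x : ℓ¹(α, ℝ)) : Summable fun a => ‖x a‖ := by
  simpa using (lp.memℓp x).summable (by norm_num)

lemma norm_eq_tsum_norm_of_lp_one (x : ℓ¹(α, ℝ)) : ‖x‖ = ∑' a, ‖x a‖ := by
  rw [lp.norm_eq_tsum_rpow (by norm_num)]
  simp

lemma summable_indicator_of_lp_one (x : ℓ¹(α, ℝ)) (s : Set α) : Summable (s.indicator x) :=
  (lp.memℓp x).summable_of_one.indicator s

lemma mass_univ (x : ℓ¹(α, ℝ)) : mass x Set.univ = ∑' a, x a := by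
  simp [mass]

lemma mass_union {s t : Set α} (hst : Disjoint s t) (x : ℓ¹(α, ℝ)) :
    mass x (s ∪ t) = mass x s + mass x t := by
  rw [mass, Set.indicator_union_of_disjoint hst,
    (summable_indicator_of_lp_one x s).tsum_add (summable_indicator_of_lp_one x t), mass, mass]

lemma mass_sub (x y : ℓ¹(α, ℝ)) (s : Set α) : mass (x - y) s = mass x s - mass y s := by
  rw [mass, lp.coeFn_sub, Pi.sub_def, Set.indicator_sub,
    (summable_indicator_of_lp_one x s).tsum_sub (summable_indicator_of_lp_one y s), mass, mass]

lemma abs_mass_le_norm (x : ℓ¹(α, ℝ)) (s : Set α) : |mass x s| ≤ ‖x‖ := by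
  have hle : ∀ a, ‖s.indicator x a‖ ≤ ‖x a‖ := norm_indicator_le_norm_self x
  have hsum := summable_norm_of_lp_one x
  have hsum_indicator := hsum.of_nonneg_of_le (fun _ => norm_nonneg _) hle
  calc |mass x s| = ‖∑' a, s.indicator x a‖ := rfl
    _ ≤ ∑' a, ‖s.indicator x a‖ := norm_tsum_le_tsum_norm hsum_indicator
    _ ≤ ∑' a, ‖x a‖ := hsum_indicator.tsum_le_tsum hle hsum
    _ = ‖x‖ := (norm_eq_tsum_norm_of_lp_one x).symm

end Mass

lemma mass_permSmul (π : Equiv.Perm ℕ) (x : ℓ¹(ℕ, ℝ)) (s : Set ℕ) :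
    mass (permSmul π x) s = mass x (π ⁻¹' s) := by
  rw [mass, ← π.tsum_eq]
  refine tsum_congr fun n => ?_
  rw [← Set.indicator_comp_right]
  simp [permSmul, Function.comp_def]

lemma mass_le_mass_preimage_add_norm_sub_permSmul (π : Equiv.Perm ℕ) (x : ℓ¹(ℕ, ℝ))
    (s : Set ℕ) : mass x s ≤ mass x (π ⁻¹' s) + ‖x - permSmul π x‖ := by
  have h := abs_mass_le_norm (x - permSmul π x) s
  rw [mass_sub, mass_permSmul] at h
  linarith [le_abs_self (mass x s - mass x (π ⁻¹' s))]

def evenHalvingPerm : Equiv.Perm ℕ where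
  toFun n := if n % 4 = 0 then n / 2 else if n % 2 = 1 then 2 * n - 1 else n + 1
  invFun n := if n % 2 = 0 then 2 * n else if n % 4 = 1 then (n + 1) / 2 else n - 1
  left_inv n := by dsimp only; split_ifs <;> omega
  right_inv n := by dsimp only; split_ifs <;> omega

def oddHalvingPerm : Equiv.Perm ℕ where
  toFun n := if n % 4 = 2 then n / 2 else if n % 2 = 1 then 2 * n else n
  invFun n := if n % 4 = 2 then n / 2 else if n % 2 = 1 then 2 * n else n
  left_inv n := by dsimp only; split_ifs <;> omega
  right_inv n := by dsimp only; split_ifs <;> omega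

def paritySwap : Equiv.Perm ℕ where
  toFun n := if n % 2 = 0 then n + 1 else n - 1
  invFun n := if n % 2 = 0 then n + 1 else n - 1
  left_inv n := by dsimp only; split_ifs <;> omega
  right_inv n := by dsimp only; split_ifs <;> omega

lemma evenHalvingPerm_preimage_even :
    evenHalvingPerm ⁻¹' {n | n % 2 = 0} = {n | n % 4 = 0} := by
  ext n
  simp only [evenHalvingPerm, Set.mem_preimage, Set.mem_ofPred_eq, Equiv.coe_fn_mk]
  split_ifs <;> omega

lemma oddHalvingPerm_preimage_odd :
    oddHalvingPerm ⁻¹' {n | n % 2 = 1} = {n | n % 4 = 2} := by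
  ext n
  simp only [oddHalvingPerm, Set.mem_preimage, Set.mem_ofPred_eq, Equiv.coe_fn_mk]
  split_ifs <;> omega

lemma paritySwap_preimage_even : paritySwap ⁻¹' {n | n % 2 = 0} = {n | n % 2 = 1} := by
  ext n
  simp only [paritySwap, Set.mem_preimage, Set.mem_ofPred_eq, Equiv.coe_fn_mk]
  split_ifs <;> omega

lemma tsum_le_norm_sub_permSmul (x : ℓ¹(ℕ, ℝ)) :
    ∑' n, x n ≤ 2 * ‖x - permSmul evenHalvingPerm x‖ + 2 * ‖x - permSmul oddHalvingPerm x‖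
      + ‖x - permSmul paritySwap x‖ := by
  have hEven := mass_le_mass_preimage_add_norm_sub_permSmul evenHalvingPerm x {n | n % 2 = 0}
  have hOdd := mass_le_mass_preimage_add_norm_sub_permSmul oddHalvingPerm x {n | n % 2 = 1}
  have hSwap := mass_le_mass_preimage_add_norm_sub_permSmul paritySwap x {n | n % 2 = 0}
  rw [evenHalvingPerm_preimage_even] at hEven
  rw [oddHalvingPerm_preimage_odd] at hOdd
  rw [paritySwap_preimage_even] at hSwap
  have hEvenSplit : mass x {n | n % 2 = 0} = mass x {n | n % 4 = 0} + mass x {n | n % 4 = 2} := by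
    rw [← mass_union]
    · congr 1; ext n; simp only [Set.mem_ofPred_eq, Set.mem_union]; omega
    · exact Set.disjoint_left.2 fun n h₀ h₂ => by simp_all
  have hTotal : ∑' n, x n = mass x {n | n % 2 = 0} + mass x {n | n % 2 = 1} := by
    rw [← mass_univ, ← mass_union]
    · congr 1; ext n; simp only [Set.mem_univ, Set.mem_ofPred_eq, Set.mem_union, true_iff]; omega
    · exact Set.disjoint_left.2 fun n h₀ h₁ => by simp_all
  linarith

/-- The canonical affine action of `S_∞` on `prob(ℕ) ⊆ ℓ¹(ℕ)` admits no approximate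
fixed point net: there is no net `(x_i)` in `prob(ℕ)` with `x_i - σ • x_i → 0` in
`ℓ¹`-norm for every `σ ∈ S_∞`. -/
theorem stmt9 : ¬ ∃ (ι : Type u) (l : Filter ι) (x : ι → lp (fun _ : ℕ => ℝ) 1),
    l.NeBot ∧ (∀ i, x i ∈ probSet) ∧
    ∀ σ : Equiv.Perm ℕ, Filter.Tendsto (fun i => x i - permSmul σ (x i)) l (nhds 0) := by
  rintro ⟨ι, l, x, hl, hprob, htend⟩
  have hdefect : Filter.Tendsto (fun i => 2 * ‖x i - permSmul evenHalvingPerm (x i)‖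
      + 2 * ‖x i - permSmul oddHalvingPerm (x i)‖ + ‖x i - permSmul paritySwap (x i)‖)
      l (nhds 0) := by
    simpa using (((htend _).norm.const_mul 2).add ((htend _).norm.const_mul 2)).add
      (htend _).norm
  obtain ⟨i, hi⟩ := (hdefect.eventually (gt_mem_nhds one_pos)).exists
  have hmass := tsum_le_norm_sub_permSmul (x i)
  rw [(hprob i).2] at hmass
  linarith
end

section
/- A Polish group $G$ is amenable if and only if every jointly norm-continuous affine action of $G$ on a nonempty bounded, closed, convex subset $C$ of the separable Hilbert space $\ell^2$ admits a net $(x_i)$ in $C$ with $x_i - g x_i \to 0$ in norm for every $g \in G$. -/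
/-!
Amenability in the sense of fixed points on compact convex metrizable sets gives approximate (in
fact exact) fixed points on bounded closed convex subsets `C` of `ℓ²`: in the weak topology `C` is
compact (Banach–Alaoglu and reflexivity) and metrizable (separability), and each `ρ g` is weakly
continuous on `C`, since sublevel sets of `ℓ ∘ ρ g` are convex and norm closed, hence weakly closed
(Mazur). Joint continuity of the weak action then follows from separate continuity because `G` is
a Baire space (an Ellis-type argument). Conversely, a compact convex metrizable `K` embeds
affinely and homeomorphically into `ℓ²` via a separating sequence of functionals scaled to be
bounded by `2⁻ⁿ` on `K`; the transported action has an approximate fixed point net, and any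
cluster point of it in the compact image is a fixed point.
-/

universe u v

open Filter Topology Set Bornology Uniformity

structure IsContinuousAffineActionOn {G E : Type*} [Monoid G] [TopologicalSpace G]
    [AddCommGroup E] [Module ℝ E] [TopologicalSpace E] (ρ : G → E → E) (K : Set E) : Prop where
  map_one : ∀ v, ρ 1 v = v
  map_mul : ∀ g h v, ρ (g * h) v = ρ g (ρ h v)
  mapsTo : ∀ g, MapsTo (ρ g) K K
  continuous : Continuous fun p : G × K => ρ p.1 p.2
  affine : ∀ g, ∀ x ∈ K, ∀ y ∈ K, ∀ t ∈ Icc (0 : ℝ) 1,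
    ρ g (t • x + (1 - t) • y) = t • ρ g x + (1 - t) • ρ g y

/-- Amenability of `G` in Day's fixed point formulation. -/
def HasFixedPointProperty (G : Type*) [Monoid G] [TopologicalSpace G] : Prop :=
  ∀ (E : Type u) [AddCommGroup E] [Module ℝ E] [TopologicalSpace E] [IsTopologicalAddGroup E]
    [ContinuousSMul ℝ E] [LocallyConvexSpace ℝ E] [T2Space E] (K : Set E),
    K.Nonempty → IsCompact K → Convex ℝ K → TopologicalSpace.MetrizableSpace K →
    ∀ ρ : G → E → E, IsContinuousAffineActionOn ρ K → ∃ x ∈ K, ∀ g, ρ g x = x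

def HasApproxFixedPoints (G : Type*) [Monoid G] [TopologicalSpace G] (F : Type*)
    [NormedAddCommGroup F] [NormedSpace ℝ F] : Prop :=
  ∀ C : Set F, C.Nonempty → IsBounded C → IsClosed C → Convex ℝ C →
    ∀ ρ : G → F → F, IsContinuousAffineActionOn ρ C →
    ∃ (ι : Type) (l : Filter ι) (x : ι → F),
      l.NeBot ∧ (∀ i, x i ∈ C) ∧ ∀ g, Tendsto (fun i => x i - ρ g (x i)) l (𝓝 0)

namespace IsContinuousAffineActionOn

variable {G E : Type*} [Monoid G] [TopologicalSpace G] [AddCommGroup E] [Module ℝ E]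
  [TopologicalSpace E] {ρ : G → E → E} {K : Set E}

theorem continuousOn (hρ : IsContinuousAffineActionOn ρ K) (g : G) : ContinuousOn (ρ g) K :=
  continuousOn_iff_continuous_domRestrict.2 <| hρ.continuous.comp (Continuous.prodMk_right g)

theorem continuous_orbit (hρ : IsContinuousAffineActionOn ρ K) {x : E} (hx : x ∈ K) :
    Continuous fun g => ρ g x :=
  hρ.continuous.comp (continuous_id.prodMk (continuous_const (y := (⟨x, hx⟩ : K))))

end IsContinuousAffineActionOn

theorem exists_fixedPoint_of_tendsto_sub_nhds_zero {ι G E : Type*} [AddCommGroup E]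
    [TopologicalSpace E] [IsTopologicalAddGroup E] [T2Space E] {K : Set E} (hK : IsCompact K)
    {ρ : G → E → E} (hρ : ∀ g, ContinuousOn (ρ g) K) {l : Filter ι} [l.NeBot] {x : ι → E}
    (hx : ∀ i, x i ∈ K) (hfix : ∀ g, Tendsto (fun i => x i - ρ g (x i)) l (𝓝 0)) :
    ∃ c ∈ K, ∀ g, ρ g c = c := by
  let U := Ultrafilter.of l
  obtain ⟨c, hcK, hc⟩ := hK.ultrafilter_le_nhds (U.map x)
    (tendsto_principal.2 (Eventually.of_forall hx))
  have hxc : Tendsto x U (𝓝 c) := hc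
  refine ⟨c, hcK, fun g => ?_⟩
  have hρx : Tendsto (fun i => ρ g (x i)) U (𝓝 (ρ g c)) :=
    (hρ g c hcK).tendsto.comp (tendsto_nhdsWithin_iff.2 ⟨hxc, Eventually.of_forall hx⟩)
  have := tendsto_nhds_unique (hxc.sub hρx) ((hfix g).mono_left (Ultrafilter.of_le l))
  exact (sub_eq_zero.1 this).symm

theorem IsCompact.exists_seq_strongDual_separating {E : Type*} [AddCommGroup E] [Module ℝ E]
    [TopologicalSpace E] [SeparatingDual ℝ E] {K : Set E} (hK : IsCompact K)
    [TopologicalSpace.MetrizableSpace K] :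
    ∃ f : ℕ → StrongDual ℝ E, (∀ n, ∀ x ∈ K, |f n x| ≤ (1 / 2) ^ n) ∧
      ∀ x ∈ K, ∀ y ∈ K, (∀ n, f n x = f n y) → x = y := by
  have : CompactSpace K := isCompact_iff_compactSpace.1 hK
  -- A compatible metric makes `K × K` second countable, hence Lindelöf.
  let := TopologicalSpace.metrizableSpaceMetric K
  obtain ⟨T, hTc, hT⟩ := TopologicalSpace.isOpen_iUnion_countable
    (fun φ : StrongDual ℝ E => {p : K × K | φ p.1 ≠ φ p.2}) fun φ =>
      isOpen_ne_fun (by fun_prop) (by fun_prop)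
  obtain ⟨f, hf⟩ := (hTc.insert 0).exists_eq_range (insert_nonempty _ _)
  have hsep : ∀ x ∈ K, ∀ y ∈ K, (∀ n, f n x = f n y) → x = y := by
    intro x hx y hy hxy
    by_contra hne
    obtain ⟨φ, hφ⟩ := SeparatingDual.exists_separating_of_ne (R := ℝ) hne
    have : ((⟨x, hx⟩, ⟨y, hy⟩) : K × K) ∈ ⋃ φ ∈ T, {p : K × K | φ p.1 ≠ φ p.2} :=
      hT ▸ mem_iUnion.2 ⟨φ, hφ⟩
    obtain ⟨φ', hφ'T, hφ'⟩ := mem_iUnion₂.1 this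
    obtain ⟨n, rfl⟩ : φ' ∈ range f := hf ▸ mem_insert_of_mem _ hφ'T
    exact hφ' (hxy n)
  choose M hM using fun n => hK.exists_bound_of_continuousOn (f n).continuous.continuousOn
  have hc : ∀ n, 0 < (1 / 2 : ℝ) ^ n / (1 + |M n|) := fun n => by positivity
  refine ⟨fun n => ((1 / 2 : ℝ) ^ n / (1 + |M n|)) • f n, fun n x hx => ?_, fun x hx y hy h =>
    hsep x hx y hy fun n => ?_⟩
  · have hfx : |f n x| ≤ 1 + |M n| := (hM n x hx).trans (by linarith [le_abs_self (M n)])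
    calc |((1 / 2 : ℝ) ^ n / (1 + |M n|)) • f n x|
        = (1 / 2 : ℝ) ^ n / (1 + |M n|) * |f n x| := by
          rw [smul_eq_mul, abs_mul, abs_of_pos (hc n)]
      _ ≤ (1 / 2 : ℝ) ^ n / (1 + |M n|) * (1 + |M n|) := by gcongr
      _ = (1 / 2) ^ n := div_mul_cancel₀ _ (by positivity)
  · exact (smul_right_injective ℝ (hc n).ne').eq_iff.1 (h n)

local notation "ℓ²" => lp (fun _ : ℕ => ℝ) 2

theorem IsCompact.exists_affine_embedding_lp {E : Type*} [AddCommGroup E] [Module ℝ E]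
    [TopologicalSpace E] [SeparatingDual ℝ E] {K : Set E} (hK : IsCompact K)
    [TopologicalSpace.MetrizableSpace K] :
    ∃ T : E → ℓ², ContinuousOn T K ∧ InjOn T K ∧
      ∀ x ∈ K, ∀ y ∈ K, ∀ a b : ℝ, T (a • x + b • y) = a • T x + b • T y := by
  obtain ⟨f, hfb, hfsep⟩ := hK.exists_seq_strongDual_separating
  have hbound : ∀ n, ∀ x ∈ K, ‖(lp.single 2 n (f n x) : ℓ²)‖ ≤ (1 / 2) ^ n := fun n x hx => by
    rw [lp.norm_single (by norm_num)]
    exact hfb n x hx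
  have hsum : ∀ x ∈ K, Summable fun n => (lp.single 2 n (f n x) : ℓ²) := fun x hx =>
    .of_norm_bounded summable_geometric_two fun n => hbound n x hx
  have hcoord : ∀ x ∈ K, ∀ i, (∑' n, lp.single 2 n (f n x) : ℓ²) i = f i x := by
    intro x hx i
    refine ((hsum x hx).hasSum.mapL (lp.evalCLM ℝ _ 2 i)).unique ?_
    convert hasSum_single i fun n (hn : n ≠ i) => ?_ using 1
    · exact (lp.single_apply_self (E := fun _ : ℕ => ℝ) 2 i _).symm
    · exact lp.single_apply_ne (E := fun _ : ℕ => ℝ) 2 n _ hn.symm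
  -- `T x = (f n x)ₙ`, written as a series so that `T` is defined on all of `E`.
  refine ⟨fun x => ∑' n, lp.single 2 n (f n x), ?_, fun x hx y hy hxy => ?_, ?_⟩
  · rw [continuousOn_iff_continuous_domRestrict]
    exact continuous_tsum (fun n => (lp.isometry_single n).continuous.comp (by fun_prop))
      summable_geometric_two
      fun n x => hbound n x x.2
  · refine hfsep x hx y hy fun n => ?_
    rw [← hcoord x hx, ← hcoord y hy]
    exact congrArg (fun v : ℓ² => v n) hxy
  · intro x hx y hy a b
    simp only [map_add, map_smul, lp.single_add, lp.single_smul]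
    rw [Summable.tsum_add ((hsum x hx).const_smul a) ((hsum y hy).const_smul b),
      Summable.tsum_const_smul a (hsum x hx), Summable.tsum_const_smul b (hsum y hy)]

theorem IsContinuousAffineActionOn.image {G E F : Type*} [Monoid G] [TopologicalSpace G]
    [AddCommGroup E] [Module ℝ E] [TopologicalSpace E] [AddCommGroup F] [Module ℝ F]
    [TopologicalSpace F] [T2Space F] {ρ : G → E → E} {K : Set E}
    (hρ : IsContinuousAffineActionOn ρ K) (hK : IsCompact K) (hKc : Convex ℝ K) {T : E → F}
    (hTc : ContinuousOn T K) (hTi : InjOn T K)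
    (hTa : ∀ x ∈ K, ∀ y ∈ K, ∀ a b : ℝ, T (a • x + b • y) = a • T x + b • T y) :
    ∃ σ : G → F → F, IsContinuousAffineActionOn σ (T '' K) ∧
      ∀ g, ∀ x ∈ K, σ g (T x) = T (ρ g x) := by
  classical
  have : CompactSpace K := isCompact_iff_compactSpace.1 hK
  let S : T '' K → K := fun v => ⟨v.2.choose, v.2.choose_spec.1⟩
  have hTS : ∀ v, T (S v) = v := fun v => v.2.choose_spec.2
  have hST : ∀ x (hx : x ∈ K), (S ⟨T x, mem_image_of_mem T hx⟩ : E) = x := fun x hx =>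
    hTi (S _).2 hx (hTS _)
  have hS : Continuous S := by
    have hT : IsEmbedding (K.domRestrict T) :=
      ((continuousOn_iff_continuous_domRestrict.1 hTc).isClosedEmbedding hTi.injective).isEmbedding
    refine hT.continuous_iff.2 ?_
    convert continuous_subtype_val (p := (· ∈ T '' K)) using 1
    exact funext hTS
  let σ : G → F → F := fun g v => if h : v ∈ T '' K then T (ρ g (S ⟨v, h⟩)) else v
  have hσT : ∀ g, ∀ x ∈ K, σ g (T x) = T (ρ g x) := fun g x hx => by
    simp only [σ, dif_pos (mem_image_of_mem T hx), hST x hx]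
  refine ⟨σ, ⟨fun v => ?_, fun g h v => ?_, ?_, ?_, ?_⟩, hσT⟩
  · by_cases hv : v ∈ T '' K
    · obtain ⟨x, hx, rfl⟩ := hv
      rw [hσT 1 x hx, hρ.map_one]
    · exact dif_neg hv
  · by_cases hv : v ∈ T '' K
    · obtain ⟨x, hx, rfl⟩ := hv
      rw [hσT _ x hx, hσT h x hx, hσT g _ (hρ.mapsTo h hx), hρ.map_mul]
    · have hσv : ∀ g, σ g v = v := fun g => dif_neg hv
      rw [hσv, hσv, hσv]
  · rintro g _ ⟨x, hx, rfl⟩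
    rw [hσT g x hx]
    exact mem_image_of_mem T (hρ.mapsTo g hx)
  · have : (fun p : G × T '' K => σ p.1 p.2) = fun p => T (ρ p.1 (S p.2)) :=
      funext fun p => dif_pos p.2.2
    rw [this]
    exact hTc.comp_continuous (hρ.continuous.comp (continuous_fst.prodMk (hS.comp continuous_snd)))
      fun p => hρ.mapsTo p.1 (S p.2).2
  · rintro g _ ⟨x, hx, rfl⟩ _ ⟨y, hy, rfl⟩ t ht
    have hxy : t • x + (1 - t) • y ∈ K := hKc hx hy ht.1 (by linarith [ht.2]) (by ring)
    rw [← hTa x hx y hy, hσT g _ hxy, hρ.affine g x hx y hy t ht,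
      hTa _ (hρ.mapsTo g hx) _ (hρ.mapsTo g hy), hσT g x hx, hσT g y hy]

theorem IsContinuousAffineActionOn.exists_fixedPoint_of_image {G E F : Type*} [Monoid G]
    [TopologicalSpace G] [AddCommGroup E] [Module ℝ E] [TopologicalSpace E] [AddCommGroup F]
    [Module ℝ F] [TopologicalSpace F] [T2Space F] {ρ : G → E → E} {K : Set E}
    (hρ : IsContinuousAffineActionOn ρ K) (hK : IsCompact K) (hKc : Convex ℝ K) {T : E → F}
    (hTc : ContinuousOn T K) (hTi : InjOn T K)
    (hTa : ∀ x ∈ K, ∀ y ∈ K, ∀ a b : ℝ, T (a • x + b • y) = a • T x + b • T y)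
    (hfix : ∀ σ : G → F → F, IsContinuousAffineActionOn σ (T '' K) →
      ∃ y ∈ T '' K, ∀ g, σ g y = y) :
    ∃ x ∈ K, ∀ g, ρ g x = x := by
  obtain ⟨σ, hσ, hσT⟩ := hρ.image hK hKc hTc hTi hTa
  obtain ⟨_, ⟨x, hx, rfl⟩, hx_fix⟩ := hfix σ hσ
  exact ⟨x, hx, fun g => hTi (hρ.mapsTo g hx) hx ((hσT g x hx).symm.trans (hx_fix g))⟩

theorem Convex.image_of_affine {E F : Type*} [AddCommGroup E] [Module ℝ E] [AddCommGroup F]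
    [Module ℝ F] {K : Set E} (hK : Convex ℝ K) {T : E → F}
    (hTa : ∀ x ∈ K, ∀ y ∈ K, ∀ a b : ℝ, T (a • x + b • y) = a • T x + b • T y) :
    Convex ℝ (T '' K) := by
  rintro _ ⟨x, hx, rfl⟩ _ ⟨y, hy, rfl⟩ a b ha hb hab
  exact ⟨a • x + b • y, hK hx hy ha hb hab, hTa x hx y hy a b⟩

theorem HasApproxFixedPoints.hasFixedPointProperty {G : Type*} [Monoid G] [TopologicalSpace G]
    (h : HasApproxFixedPoints G ℓ²) : HasFixedPointProperty.{u} G := by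
  intro E _ _ _ _ _ _ _ K hne hK hKc _ ρ hρ
  obtain ⟨T, hTc, hTi, hTa⟩ := hK.exists_affine_embedding_lp
  refine hρ.exists_fixedPoint_of_image hK hKc hTc hTi hTa fun σ hσ => ?_
  have hC : IsCompact (T '' K) := hK.image_of_continuousOn hTc
  obtain ⟨ι, l, x, hl, hxC, hx⟩ :=
    h _ (hne.image T) hC.isBounded hC.isClosed (hKc.image_of_affine hTa) σ hσ
  exact exists_fixedPoint_of_tendsto_sub_nhds_zero hC hσ.continuousOn hxC hx

theorem exists_uniform_tendsto_smul_nhds {G X : Type*} [TopologicalSpace G] [BaireSpace G]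
    [Nonempty G] [PseudoMetricSpace X] [SMul G X] (hsmul : ∀ g : G, Continuous fun x : X => g • x)
    (horbit : ∀ x : X, Continuous fun g : G => g • x) {x : ℕ → X} {x₀ : X}
    (hx : Tendsto x atTop (𝓝 x₀)) :
    ∃ u : G, ∀ V ∈ 𝓤 X, ∃ t ∈ 𝓝 u, ∀ᶠ k in atTop, ∀ g ∈ t, (g • x₀, g • x k) ∈ V := by
  -- For each `r` the closed sets `F r m` cover `G`, so by Baire `⋃ m, interior (F r m)` is dense
  -- and open; `u` is taken in all of these sets at once.
  let F : ℕ → ℕ → Set G := fun r m => {g | ∀ k ≥ m, dist (g • x₀) (g • x k) ≤ 1 / (r + 1)}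
  have hF : ∀ r m, IsClosed (F r m) := fun r m => by
    simp only [F, ofPred_forall]
    exact isClosed_biInter fun k _ =>
      isClosed_le ((horbit x₀).dist (horbit (x k))) continuous_const
  have hFcover : ∀ r, ⋃ m, F r m = univ := fun r => eq_univ_of_forall fun g => by
    obtain ⟨m, hm⟩ := Metric.tendsto_atTop.1 (((hsmul g).tendsto x₀).comp hx) (1 / (r + 1))
      (by positivity)
    exact mem_iUnion.2 ⟨m, fun k hk => by rw [dist_comm]; exact (hm k hk).le⟩
  obtain ⟨u, hu⟩ := (dense_iInter_of_isOpen (fun r => isOpen_iUnion fun m => isOpen_interior)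
    fun r => dense_iUnion_interior_of_closed (hF r) (hFcover r)).nonempty
  refine ⟨u, fun V hV => ?_⟩
  obtain ⟨ε, hε, hεV⟩ := Metric.mem_uniformity_dist.1 hV
  obtain ⟨r, hr⟩ := exists_nat_one_div_lt hε
  obtain ⟨m, hm⟩ := mem_iUnion.1 (mem_iInter.1 hu r)
  exact ⟨_, isOpen_interior.mem_nhds hm, (eventually_ge_atTop m).mono fun k hk g hg =>
    hεV ((interior_subset hg k hk).trans_lt hr)⟩

theorem continuousSMul_of_separatelyContinuous {G X : Type*} [Group G]
    [TopologicalSpace G] [IsTopologicalGroup G] [BaireSpace G] [FirstCountableTopology G]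
    [TopologicalSpace X] [CompactSpace X] [TopologicalSpace.MetrizableSpace X] [MulAction G X]
    (hsmul : ∀ g : G, Continuous fun x : X => g • x)
    (horbit : ∀ x : X, Continuous fun g : G => g • x) : ContinuousSMul G X := by
  let := TopologicalSpace.metrizableSpaceMetric X
  have key : ∀ (g : ℕ → G) (x : ℕ → X) (g₀ : G) (x₀ y : X), Tendsto g atTop (𝓝 g₀) →
      Tendsto x atTop (𝓝 x₀) → Tendsto (fun n => g n • x n) atTop (𝓝 y) → y = g₀ • x₀ := by
    intro g x g₀ x₀ y hg hx hy
    obtain ⟨u, hu⟩ := exists_uniform_tendsto_smul_nhds hsmul horbit hx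
    -- Translating by `u * g₀⁻¹` moves `g n` towards `u`, near which `g • x n → g • x₀` uniformly.
    have hug : Tendsto (fun n => (u * g₀⁻¹) * g n) atTop (𝓝 u) := by
      simpa using hg.const_mul (u * g₀⁻¹)
    have h₁ : Tendsto (fun n => (u * g₀⁻¹ * g n) • x n) atTop (𝓝 (u • x₀)) :=
      tendsto_comp_of_locally_uniform_limit (F := fun k g => g • x k) (horbit x₀).continuousAt
        hug hu
    have h₂ : Tendsto (fun n => (u * g₀⁻¹ * g n) • x n) atTop (𝓝 ((u * g₀⁻¹) • y)) := by
      refine (((hsmul (u * g₀⁻¹)).tendsto y).comp hy).congr fun n => ?_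
      simp [mul_smul]
    rw [← smul_left_cancel_iff (u * g₀⁻¹), tendsto_nhds_unique h₂ h₁, smul_smul,
      inv_mul_cancel_right]
  refine ⟨continuous_iff_seqContinuous.2 fun p q hp => tendsto_of_subseq_tendsto fun ns hns => ?_⟩
  obtain ⟨y, ms, hms, hy⟩ := CompactSpace.tendsto_subseq fun n => (p (ns n)).1 • (p (ns n)).2
  have hpq := (hp.comp hns).comp hms.tendsto_atTop
  refine ⟨ms, ?_⟩
  rwa [key _ _ _ _ _ ((continuous_fst.tendsto q).comp hpq) ((continuous_snd.tendsto q).comp hpq)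
    hy] at hy

theorem Convex.isClosed_image_toWeakSpace {E : Type*} [AddCommGroup E] [Module ℝ E]
    [TopologicalSpace E] [IsTopologicalAddGroup E] [ContinuousSMul ℝ E] [LocallyConvexSpace ℝ E]
    {s : Set E} (hs : Convex ℝ s) (hsc : IsClosed s) : IsClosed (toWeakSpace ℝ E '' s) := by
  rw [← closure_eq_iff_isClosed, ← hs.toWeakSpace_closure ℝ, hsc.closure_eq]

theorem Convex.inter_preimage_of_affine {E F : Type*} [AddCommGroup E] [Module ℝ E]
    [AddCommGroup F] [Module ℝ F] {s : Set E} (hs : Convex ℝ s) {f : E → F}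
    (haff : ∀ x ∈ s, ∀ y ∈ s, ∀ t ∈ Icc (0 : ℝ) 1,
      f (t • x + (1 - t) • y) = t • f x + (1 - t) • f y)
    {I : Set F} (hI : Convex ℝ I) : Convex ℝ (s ∩ f ⁻¹' I) := by
  rintro x ⟨hx, hxI⟩ y ⟨hy, hyI⟩ a b ha hb hab
  obtain rfl : b = 1 - a := by linarith
  refine ⟨hs hx hy ha hb hab, ?_⟩
  rw [mem_preimage, haff x hx y hy a ⟨ha, by linarith⟩]
  exact hI hxI hyI ha hb hab

theorem Convex.continuousOn_toWeakSpace_of_affine {E F : Type*} [AddCommGroup E] [Module ℝ E]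
    [TopologicalSpace E] [IsTopologicalAddGroup E] [ContinuousSMul ℝ E] [LocallyConvexSpace ℝ E]
    [AddCommGroup F] [Module ℝ F] [TopologicalSpace F] {s : Set E} (hs : Convex ℝ s)
    (hsc : IsClosed s) {f : E → F} (hf : ContinuousOn f s)
    (haff : ∀ x ∈ s, ∀ y ∈ s, ∀ t ∈ Icc (0 : ℝ) 1,
      f (t • x + (1 - t) • y) = t • f x + (1 - t) • f y) :
    ContinuousOn (fun x => toWeakSpace ℝ F (f ((toWeakSpace ℝ E).symm x)))
      (toWeakSpace ℝ E '' s) := by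
  rw [continuousOn_iff_continuous_domRestrict]
  refine WeakBilin.continuous_of_continuous_eval _ fun ℓ => ?_
  -- Preimages of closed convex sets under `ℓ ∘ f` are convex and norm closed, so weakly closed.
  have hpre : ∀ I : Set ℝ, Convex ℝ I → IsClosed I →
      IsClosed ((fun w : toWeakSpace ℝ E '' s => ℓ (f ((toWeakSpace ℝ E).symm w))) ⁻¹' I) := by
    intro I hI hIc
    have hconv : Convex ℝ (s ∩ f ⁻¹' (ℓ ⁻¹' I)) :=
      hs.inter_preimage_of_affine haff (hI.linear_preimage (ℓ : F →ₗ[ℝ] ℝ))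
    have hsI : IsClosed (toWeakSpace ℝ E '' (s ∩ f ⁻¹' (ℓ ⁻¹' I))) :=
      hconv.isClosed_image_toWeakSpace
        ((ℓ.continuous.comp_continuousOn hf).preimage_isClosed_of_isClosed hsc hIc)
    convert hsI.preimage continuous_subtype_val using 1
    ext ⟨_, x, hx, rfl⟩
    simp [hx]
  rw [continuous_iff_lower_upperSemicontinuous, lowerSemicontinuous_iff_isClosed_preimage,
    upperSemicontinuous_iff_isClosed_preimage]
  exact ⟨fun a => hpre _ (convex_Iic a) isClosed_Iic, fun a => hpre _ (convex_Ici a) isClosed_Ici⟩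

section Hilbert

variable {H : Type*} [NormedAddCommGroup H] [InnerProductSpace ℝ H]

theorem surjective_inclusionInDoubleDual [CompleteSpace H] :
    Function.Surjective (NormedSpace.inclusionInDoubleDual ℝ H) := by
  intro φ
  refine ⟨(InnerProductSpace.toDual ℝ H).symm (φ.comp (innerSL ℝ)),
    ContinuousLinearMap.ext fun f => ?_⟩
  obtain ⟨z, rfl⟩ := (InnerProductSpace.toDual ℝ H).surjective f
  simp only [NormedSpace.dual_def]
  rw [InnerProductSpace.toDual_apply_apply, real_inner_comm, InnerProductSpace.toDual_symm_apply]
  rfl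

theorem Convex.isCompact_image_toWeakSpace [CompleteSpace H] {s : Set H} (hs : Convex ℝ s)
    (hb : IsBounded s) (hsc : IsClosed s) : IsCompact (toWeakSpace ℝ H '' s) := by
  have hrange : range (NormedSpace.inclusionInDoubleDualWeak ℝ H) = univ := by
    refine eq_univ_of_forall fun Φ => ?_
    obtain ⟨y, hy⟩ := surjective_inclusionInDoubleDual (WeakDual.toStrongDual Φ)
    exact ⟨toWeakSpace ℝ H y, ContinuousLinearMap.ext fun f => DFunLike.congr_fun hy f⟩
  have := NormedSpace.isCompact_closure_of_isBounded ℝ H (toWeakSpace ℝ H '' s)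
    (by rwa [preimage_image_eq s (toWeakSpace ℝ H).injective]) (hrange ▸ subset_univ _)
  rwa [(hs.isClosed_image_toWeakSpace hsc).closure_eq] at this

theorem IsCompact.metrizableSpace_weakSpace [TopologicalSpace.SeparableSpace H]
    {K : Set (WeakSpace ℝ H)} (hK : IsCompact K) : TopologicalSpace.MetrizableSpace K := by
  have : CompactSpace K := isCompact_iff_compactSpace.1 hK
  let d := TopologicalSpace.denseSeq H
  let j : K → ℕ → ℝ := fun w n => inner ℝ (d n) ((toWeakSpace ℝ H).symm w)
  have hj : Continuous j := continuous_pi fun n =>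
    (WeakBilin.eval_continuous (topDualPairing ℝ H).flip (innerSL ℝ (d n))).comp
      (continuous_subtype_val (p := (· ∈ K)))
  refine (hj.isClosedEmbedding fun v w hvw => ?_).isEmbedding.metrizableSpace
  have : ∀ z : H, inner ℝ z ((toWeakSpace ℝ H).symm v - (toWeakSpace ℝ H).symm w) = 0 :=
    fun z => (TopologicalSpace.denseRange_denseSeq H).induction_on z
      (isClosed_eq (by fun_prop) continuous_const) fun n => by
        rw [inner_sub_right, sub_eq_zero]
        exact congrFun hvw n
  exact Subtype.ext <| (toWeakSpace ℝ H).symm.injective <| sub_eq_zero.1 <|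
    inner_self_eq_zero.1 (this _)

end Hilbert

instance : TopologicalSpace.SeparableSpace ℓ² := by
  let s : Set ℓ² := ⋃ n, range (lp.single 2 n)
  have hs : TopologicalSpace.IsSeparable s :=
    .iUnion fun n => TopologicalSpace.isSeparable_range (lp.isometry_single n).continuous
  refine TopologicalSpace.isSeparable_univ_iff.1 <| (hs.span (R := ℝ)).closure.mono fun f _ => ?_
  exact mem_closure_of_tendsto (lp.hasSum_single (by norm_num) f) <| .of_forall fun t =>
    sum_mem fun n _ => Submodule.subset_span <| mem_iUnion.2 ⟨n, mem_range_self _⟩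

theorem HasFixedPointProperty.down {G : Type*} [Monoid G] [TopologicalSpace G]
    (h : HasFixedPointProperty.{max u v} G) : HasFixedPointProperty.{u} G := by
  intro E _ _ _ _ _ _ _ K hne hK hKc _ ρ hρ
  let e : ULift.{v} E ≃L[ℝ] E := ContinuousLinearEquiv.ulift
  have : IsTopologicalAddGroup (ULift.{v} E) :=
    IsEmbedding.uliftDown.isInducing.topologicalAddGroup e
  have : ContinuousSMul ℝ (ULift.{v} E) :=
    IsEmbedding.uliftDown.isInducing.continuousSMul continuous_id rfl
  have : LocallyConvexSpace ℝ (ULift.{v} E) := .induced e.toLinearMap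
  have hKe : IsCompact (e.symm '' K) := hK.image e.symm.continuous
  have : TopologicalSpace.MetrizableSpace (e.symm '' K) :=
    ((IsEmbedding.uliftDown.comp IsEmbedding.subtypeVal).codRestrict K
      (by rintro ⟨_, x, hx, rfl⟩; exact hx)).metrizableSpace
  refine hρ.exists_fixedPoint_of_image hK hKc e.symm.continuous.continuousOn
    e.symm.injective.injOn (fun x _ y _ a b => by simp only [map_add, map_smul]) fun σ hσ =>
    h _ _ (hne.image _) hKe (hKc.linear_image e.symm.toLinearMap) this σ hσ

theorem IsContinuousAffineActionOn.conj_toWeakSpace {G : Type*} [Group G] [TopologicalSpace G]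
    [IsTopologicalGroup G] [BaireSpace G] [FirstCountableTopology G] {H : Type*}
    [NormedAddCommGroup H] [InnerProductSpace ℝ H] [CompleteSpace H]
    [TopologicalSpace.SeparableSpace H] {C : Set H} (hb : IsBounded C) (hcl : IsClosed C)
    (hconv : Convex ℝ C) {ρ : G → H → H} (hρ : IsContinuousAffineActionOn ρ C) :
    IsContinuousAffineActionOn (fun g w => toWeakSpace ℝ H (ρ g ((toWeakSpace ℝ H).symm w)))
      (toWeakSpace ℝ H '' C) := by
  let W := toWeakSpace ℝ H
  let K := W '' C
  let ρ' : G → WeakSpace ℝ H → WeakSpace ℝ H := fun g w => W (ρ g (W.symm w))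
  have hK : IsCompact K := hconv.isCompact_image_toWeakSpace hb hcl
  have : CompactSpace K := isCompact_iff_compactSpace.1 hK
  have : TopologicalSpace.MetrizableSpace K := hK.metrizableSpace_weakSpace
  have hmaps : ∀ g, MapsTo (ρ' g) K K := by
    rintro g _ ⟨x, hx, rfl⟩
    exact ⟨ρ g x, hρ.mapsTo g hx, by simp [ρ', W]⟩
  let : MulAction G K :=
    { smul g w := ⟨ρ' g w, hmaps g w.2⟩
      one_smul w := Subtype.ext <| show W (ρ 1 (W.symm w)) = w by
        rw [hρ.map_one, LinearEquiv.apply_symm_apply]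
      mul_smul g h w := Subtype.ext <|
        show W (ρ (g * h) (W.symm w)) = W (ρ g (W.symm (W (ρ h (W.symm w))))) by
          rw [hρ.map_mul, LinearEquiv.symm_apply_apply] }
  have : ContinuousSMul G K := by
    refine continuousSMul_of_separatelyContinuous (fun g => ?_) fun w => ?_
    · exact (hconv.continuousOn_toWeakSpace_of_affine hcl (hρ.continuousOn g)
        (hρ.affine g)).mapsToRestrict (hmaps g)
    · obtain ⟨_, ⟨x, hx, rfl⟩⟩ := w
      refine Continuous.subtype_mk ?_ _
      simpa [ρ', W, Function.comp_def, toWeakSpaceCLM_eq_toWeakSpace] using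
        (toWeakSpaceCLM ℝ H).continuous.comp (hρ.continuous_orbit hx)
  refine
    { map_one := fun v => by simp [hρ.map_one]
      map_mul := fun g h v => by simp [hρ.map_mul]
      mapsTo := hmaps
      continuous := continuous_subtype_val.comp (continuous_smul (M := G) (X := K))
      affine := ?_ }
  rintro g _ ⟨x, hx, rfl⟩ _ ⟨y, hy, rfl⟩ t ht
  simp [← map_smul, ← map_add, hρ.affine g x hx y hy t ht]

theorem HasFixedPointProperty.exists_fixedPoint_of_isBounded {G : Type*} [Group G]
    [TopologicalSpace G] [IsTopologicalGroup G] [BaireSpace G] [FirstCountableTopology G]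
    (hG : HasFixedPointProperty.{u} G) {H : Type u} [NormedAddCommGroup H]
    [InnerProductSpace ℝ H] [CompleteSpace H] [TopologicalSpace.SeparableSpace H] {C : Set H}
    (hne : C.Nonempty) (hb : IsBounded C) (hcl : IsClosed C) (hconv : Convex ℝ C)
    {ρ : G → H → H} (hρ : IsContinuousAffineActionOn ρ C) : ∃ x ∈ C, ∀ g, ρ g x = x := by
  have hK := hconv.isCompact_image_toWeakSpace hb hcl
  have : LocallyConvexSpace ℝ (WeakSpace ℝ H) := WeakBilin.locallyConvexSpace
  obtain ⟨_, ⟨x, hx, rfl⟩, hfix⟩ := hG _ _ (hne.image _) hK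
    (hconv.linear_image (toWeakSpace ℝ H).toLinearMap) hK.metrizableSpace_weakSpace _
    (hρ.conj_toWeakSpace hb hcl hconv)
  exact ⟨x, hx, fun g => (toWeakSpace ℝ H).injective (by simpa using hfix g)⟩

/-- A Polish group is amenable (expressed, via Day's theorem, as the fixed point property
for continuous affine actions on nonempty compact convex metrizable subsets of locally
convex spaces) if and only if every jointly norm-continuous affine action of it on a
nonempty bounded closed convex subset of the Hilbert space `ℓ²` admits an approximate
fixed point net. -/
theorem stmt11 {G : Type*} [Group G] [TopologicalSpace G] [IsTopologicalGroup G]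
    [PolishSpace G] :
    (∀ (E : Type u) [AddCommGroup E] [Module ℝ E] [TopologicalSpace E]
        [IsTopologicalAddGroup E] [ContinuousSMul ℝ E] [LocallyConvexSpace ℝ E] [T2Space E],
      ∀ K : Set E, K.Nonempty → IsCompact K → Convex ℝ K →
        TopologicalSpace.MetrizableSpace K →
      ∀ ρ : G → E → E, (∀ v, ρ 1 v = v) → (∀ g h v, ρ (g * h) v = ρ g (ρ h v)) →
      (∀ g, Set.MapsTo (ρ g) K K) →
      (Continuous fun p : G × K => ρ p.1 (p.2 : E)) →
      (∀ g, ∀ x ∈ K, ∀ y ∈ K, ∀ t : ℝ, t ∈ Set.Icc (0:ℝ) 1 →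
        ρ g (t • x + (1 - t) • y) = t • ρ g x + (1 - t) • ρ g y) →
      ∃ x ∈ K, ∀ g : G, ρ g x = x)
    ↔
    (∀ C : Set (lp (fun _ : ℕ => ℝ) 2), C.Nonempty → Bornology.IsBounded C →
        IsClosed C → Convex ℝ C →
      ∀ ρ : G → lp (fun _ : ℕ => ℝ) 2 → lp (fun _ : ℕ => ℝ) 2,
        (∀ v, ρ 1 v = v) → (∀ g h v, ρ (g * h) v = ρ g (ρ h v)) →
      (∀ g, Set.MapsTo (ρ g) C C) →
      (Continuous fun p : G × C => ρ p.1 (p.2 : lp (fun _ : ℕ => ℝ) 2)) →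
      (∀ g, ∀ x ∈ C, ∀ y ∈ C, ∀ t : ℝ, t ∈ Set.Icc (0:ℝ) 1 →
        ρ g (t • x + (1 - t) • y) = t • ρ g x + (1 - t) • ρ g y) →
      ∃ (ι : Type) (l : Filter ι) (x : ι → lp (fun _ : ℕ => ℝ) 2),
        l.NeBot ∧ (∀ i, x i ∈ C) ∧
        ∀ g : G, Filter.Tendsto (fun i => x i - ρ g (x i)) l (nhds 0)) := by
  constructor
  · intro h C hne hb hcl hconv ρ h1 hmul hmaps hcont haff
    have hG : HasFixedPointProperty.{u} G := fun E _ _ _ _ _ _ _ K hne hK hconv hKm ρ hρ =>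
      h E K hne hK hconv hKm ρ hρ.map_one hρ.map_mul hρ.mapsTo hρ.continuous hρ.affine
    obtain ⟨x, hx, hfix⟩ := (HasFixedPointProperty.down.{0, u} hG).exists_fixedPoint_of_isBounded
      hne hb hcl hconv ⟨h1, hmul, hmaps, hcont, haff⟩
    exact ⟨Unit, ⊤, fun _ => x, inferInstance, fun _ => hx, fun g => by simp [hfix g]⟩
  · intro h E _ _ _ _ _ _ _ K hne hK hconv hKm ρ h1 hmul hmaps hcont haff
    have hG : HasApproxFixedPoints G (lp (fun _ : ℕ => ℝ) 2) := fun C hne hb hcl hconv ρ hρ =>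
      h C hne hb hcl hconv ρ hρ.map_one hρ.map_mul hρ.mapsTo hρ.continuous hρ.affine
    exact hG.hasFixedPointProperty E K hne hK hconv hKm ρ ⟨h1, hmul, hmaps, hcont, haff⟩
end

section
/- Let $G$ be a locally compact group, $\lambda$ a left Haar measure, $C$ a complete bounded convex subset of a locally convex space $X$ on which $G$ acts continuously by affine maps, $x \in C$, and $F \subseteq G$ a compact set of positive measure with barycenter $x_F = \frac{1}{\lambda(F)} \int_F g \cdot x \, d\lambda(g)$. Then for every $\gamma \in G$ and every continuous seminorm $q$ on $X$, $q(x_F - \gamma \cdot x_F) \le \frac{\lambda(\gamma F \triangle F)}{\lambda(F)} \cdot \sup_{v \in G} q(v \cdot x)$, and the supremum is finite since $C$ is bounded. -/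
/-!
Weak barycenters satisfy Jensen's inequality for convex functions continuous on `C`: separating
`(x_F, ∫ h)` from the convex epigraph of `h` in `X × ℝ` would contradict the barycenter identity.
Applied to `± φ ∘ ρ γ`, convex because the action is affine, this gives
`φ (γ x_F) = λ(F)⁻¹ ∫_F φ (γ g x) dλ(g) = λ(F)⁻¹ ∫_{γF} φ (v x) dλ(v)` by left invariance.
So `φ (x_F - γ x_F)` is `λ(F)⁻¹` times a difference of integrals over `F` and `γF`, at most
`λ(γF ∆ F) sup_v q (v x)` when `|φ| ≤ q`, and a Hahn–Banach functional with
`φ (x_F - γ x_F) = q (x_F - γ x_F)` gives the estimate. As `G` need not be Hausdorff, the compact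
set `F` need not be measurable, so this integral estimate passes through measurable hulls.
-/

open scoped symmDiff Pointwise

open MeasureTheory Set ProbabilityTheory

section Barycenter

variable {α E : Type*} [MeasurableSpace α] {ν : Measure α} [IsProbabilityMeasure ν]
  [AddCommGroup E] [TopologicalSpace E] [IsTopologicalAddGroup E] [Module ℝ E]
  [ContinuousSMul ℝ E] [LocallyConvexSpace ℝ E]

theorem Convex.mem_closure_of_forall_clm_eq_integral {s : Set E} (hs : Convex ℝ s)
    {f : α → E} (hfs : ∀ᵐ a ∂ν, f a ∈ s) (hf : ∀ ℓ : E →L[ℝ] ℝ, Integrable (fun a ↦ ℓ (f a)) ν)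
    {b : E} (hb : ∀ ℓ : E →L[ℝ] ℝ, ℓ b = ∫ a, ℓ (f a) ∂ν) : b ∈ closure s := by
  by_contra hbs
  obtain ⟨ℓ, u, hℓs, huℓ⟩ := geometric_hahn_banach_closed_point hs.closure isClosed_closure hbs
  have : ∫ a, ℓ (f a) ∂ν ≤ u := by
    simpa using integral_mono_ae (hf ℓ) (integrable_const u)
      (hfs.mono fun a ha ↦ (hℓs _ (subset_closure ha)).le)
  linarith [hb ℓ]

theorem ConvexOn.le_integral_of_forall_clm_eq_integral {C : Set E} {h : E → ℝ}
    (hh : ConvexOn ℝ C h) (hhC : ContinuousOn h C) {f : α → E} (hfC : ∀ᵐ a ∂ν, f a ∈ C)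
    (hf : ∀ ℓ : E →L[ℝ] ℝ, Integrable (fun a ↦ ℓ (f a)) ν) (hhf : Integrable (fun a ↦ h (f a)) ν)
    {b : E} (hbC : b ∈ C) (hb : ∀ ℓ : E →L[ℝ] ℝ, ℓ b = ∫ a, ℓ (f a) ∂ν) :
    h b ≤ ∫ a, h (f a) ∂ν := by
  -- `(b, ∫ h ∘ f)` is the weak barycenter of the points `(f a, h (f a))` of the epigraph
  have hmem : (b, ∫ a, h (f a) ∂ν) ∈ closure {p : E × ℝ | p.1 ∈ C ∧ h p.1 ≤ p.2} := by
    refine hh.convex_epigraph.mem_closure_of_forall_clm_eq_integral (f := fun a ↦ (f a, h (f a)))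
      (hfC.mono fun a ha ↦ ⟨ha, le_rfl⟩) (fun ℓ ↦ ?_) (fun ℓ ↦ ?_)
    · simp only [← ℓ.comp_inl_add_comp_inr]
      exact (hf _).add ((ℓ.comp (.inr ℝ E ℝ)).integrable_comp hhf)
    · simp only [← ℓ.comp_inl_add_comp_inr]
      rw [integral_add (hf _) ((ℓ.comp (.inr ℝ E ℝ)).integrable_comp hhf), ← hb,
        (ℓ.comp (.inr ℝ E ℝ)).integral_comp_comm hhf]
  refine ContinuousWithinAt.closure_le (f := fun p : E × ℝ ↦ h p.1) hmem ?_
    continuous_snd.continuousWithinAt fun p hp ↦ hp.2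
  exact (hhC _ hbC).comp continuousWithinAt_fst fun p hp ↦ hp.1

theorem map_eq_integral_of_forall_clm_eq_integral {C : Set E} (hC : Convex ℝ C) {h : E → ℝ}
    (hhC : ContinuousOn h C)
    (hh : ∀ y ∈ C, ∀ z ∈ C, ∀ t ∈ Icc (0 : ℝ) 1,
      h (t • y + (1 - t) • z) = t * h y + (1 - t) * h z)
    {f : α → E} (hfC : ∀ᵐ a ∂ν, f a ∈ C)
    (hf : ∀ ℓ : E →L[ℝ] ℝ, Integrable (fun a ↦ ℓ (f a)) ν) (hhf : Integrable (fun a ↦ h (f a)) ν)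
    {b : E} (hbC : b ∈ C) (hb : ∀ ℓ : E →L[ℝ] ℝ, ℓ b = ∫ a, ℓ (f a) ∂ν) :
    h b = ∫ a, h (f a) ∂ν := by
  have hcomb : ∀ y ∈ C, ∀ z ∈ C, ∀ ⦃s t : ℝ⦄, 0 ≤ s → 0 ≤ t → s + t = 1 →
      h (s • y + t • z) = s • h y + t • h z := by
    intro y hy z hz s t hs ht hst
    obtain rfl : t = 1 - s := by linarith
    exact hh y hy z hz s ⟨hs, by linarith⟩
  have hconvex : ConvexOn ℝ C h :=
    ⟨hC, fun y hy z hz _ _ hs ht hst ↦ (hcomb y hy z hz hs ht hst).le⟩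
  have hconcave : ConcaveOn ℝ C h :=
    ⟨hC, fun y hy z hz _ _ hs ht hst ↦ (hcomb y hy z hz hs ht hst).ge⟩
  refine le_antisymm (hconvex.le_integral_of_forall_clm_eq_integral hhC hfC hf hhf hbC hb) ?_
  have := hconcave.neg.le_integral_of_forall_clm_eq_integral hhC.neg hfC hf hhf.neg hbC hb
  simp only [Pi.neg_apply, integral_neg] at this
  linarith

end Barycenter

section SymmDiff

variable {α : Type*} [MeasurableSpace α] {μ : Measure α}

theorem measure_toMeasurable_sdiff_toMeasurable_sdiff_eq_zero {s t u : Set α} (hs : μ s ≠ ⊤)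
    (hu : MeasurableSet u) (hstu : s \ t ⊆ u) :
    μ ((toMeasurable μ s \ toMeasurable μ t) \ u) = 0 := by
  rw [sdiff_sdiff, sdiff_eq,
    Measure.measure_toMeasurable_inter ((measurableSet_toMeasurable μ t).union hu).compl hs]
  refine measure_mono_null (fun a ⟨has, hat⟩ ↦ hat (Or.inr (hstu ⟨has, fun ht ↦ ?_⟩))) measure_empty
  exact hat (Or.inl (subset_toMeasurable μ t ht))

theorem measure_symmDiff_toMeasurable_le {s t : Set α} (hs : μ s ≠ ⊤) (ht : μ t ≠ ⊤) :
    μ (toMeasurable μ s ∆ toMeasurable μ t) ≤ μ (s ∆ t) := by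
  set s' := toMeasurable μ s
  set t' := toMeasurable μ t
  set W := toMeasurable μ (s ∆ t)
  have hW : MeasurableSet W := measurableSet_toMeasurable μ _
  have hstW : s \ t ⊆ W := fun a ha ↦ subset_toMeasurable μ _ (Or.inl ha)
  have htsW : t \ s ⊆ W := fun a ha ↦ subset_toMeasurable μ _ (Or.inr ha)
  calc μ (s' ∆ t') ≤ μ (W ∪ ((s' \ t') \ W ∪ (t' \ s') \ W)) := by
        refine measure_mono fun a ha ↦ ?_
        by_cases haW : a ∈ W
        · exact Or.inl haW
        · rcases ha with ha | ha
          exacts [Or.inr (Or.inl ⟨ha, haW⟩), Or.inr (Or.inr ⟨ha, haW⟩)]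
    _ ≤ μ W + (0 + 0) := by
        refine (measure_union_le _ _).trans (add_le_add le_rfl ((measure_union_le _ _).trans ?_))
        exact add_le_add (measure_toMeasurable_sdiff_toMeasurable_sdiff_eq_zero hs hW hstW).le
          (measure_toMeasurable_sdiff_toMeasurable_sdiff_eq_zero ht hW htsW).le
    _ = μ (s ∆ t) := by simp [W, measure_toMeasurable]

end SymmDiff

section SetIntegral

variable {α E : Type*} [MeasurableSpace α] {μ : Measure α} [NormedAddCommGroup E] [NormedSpace ℝ E]
  {f : α → E} {M : ℝ} {s t : Set α}

theorem norm_setIntegral_sub_setIntegral_le_of_measurableSet (hf : AEStronglyMeasurable f μ)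
    (hM : ∀ a, ‖f a‖ ≤ M) (hsm : MeasurableSet s) (htm : MeasurableSet t) (hs : μ s ≠ ⊤)
    (ht : μ t ≠ ⊤) : ‖∫ a in s, f a ∂μ - ∫ a in t, f a ∂μ‖ ≤ M * μ.real (s ∆ t) := by
  have hint : ∀ {u : Set α}, μ u ≠ ⊤ → IntegrableOn f u μ := fun hu ↦
    Measure.integrableOn_of_bounded hu hf (ae_of_all _ hM)
  have hdiff : ∫ a in s, f a ∂μ - ∫ a in t, f a ∂μ
      = ∫ a in s \ t, f a ∂μ - ∫ a in t \ s, f a ∂μ := by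
    rw [← integral_inter_add_sdiff htm (hint hs), ← integral_inter_add_sdiff hsm (hint ht),
      inter_comm]
    abel
  rw [hdiff, measureReal_symmDiff_eq hsm htm hs ht, mul_add]
  refine (norm_sub_le _ _).trans (add_le_add ?_ ?_)
  · exact norm_setIntegral_le_of_norm_le_const ((measure_mono sdiff_subset).trans_lt hs.lt_top)
      fun a _ ↦ hM a
  · exact norm_setIntegral_le_of_norm_le_const ((measure_mono sdiff_subset).trans_lt ht.lt_top)
      fun a _ ↦ hM a

theorem norm_setIntegral_sub_setIntegral_le (hf : AEStronglyMeasurable f μ)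
    (hM : ∀ a, ‖f a‖ ≤ M) (hs : μ s ≠ ⊤) (ht : μ t ≠ ⊤) :
    ‖∫ a in s, f a ∂μ - ∫ a in t, f a ∂μ‖ ≤ M * μ.real (s ∆ t) := by
  rcases isEmpty_or_nonempty α with hα | ⟨⟨a⟩⟩
  · simp [Subsingleton.elim μ 0]
  rw [← Measure.restrict_toMeasurable hs, ← Measure.restrict_toMeasurable ht]
  refine (norm_setIntegral_sub_setIntegral_le_of_measurableSet hf hM
    (measurableSet_toMeasurable μ s) (measurableSet_toMeasurable μ t)
    (by rwa [measure_toMeasurable]) (by rwa [measure_toMeasurable])).trans ?_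
  exact mul_le_mul_of_nonneg_left (ENNReal.toReal_mono (measure_symmDiff_ne_top hs ht)
    (measure_symmDiff_toMeasurable_le hs ht)) ((norm_nonneg _).trans (hM a))

end SetIntegral

theorem Seminorm.exists_clm_apply_eq_of_continuous {E : Type*} [AddCommGroup E]
    [TopologicalSpace E] [Module ℝ E] [PolynormableSpace ℝ E] {p : Seminorm ℝ E}
    (hp : Continuous p) (y : E) : ∃ ℓ : E →L[ℝ] ℝ, ℓ y = p y ∧ ∀ z, |ℓ z| ≤ p z := by
  have H : ∀ c : ℝ, c • y = 0 → (RingHom.id ℝ) c • p y = 0 := fun c hc ↦ by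
    rw [RingHom.id_apply, smul_eq_mul, ← abs_eq_zero, abs_mul, abs_of_nonneg (apply_nonneg p y),
      ← Real.norm_eq_abs, ← map_smul_eq_mul, hc, map_zero]
  set f := LinearPMap.mkSpanSingleton' y (p y) H
  have hy : y ∈ f.domain := Submodule.mem_span_singleton_self y
  have hfp : ∀ z : f.domain, f z ≤ p z := by
    rintro ⟨z, hz⟩
    obtain ⟨c, rfl⟩ := Submodule.mem_span_singleton.mp hz
    rw [LinearPMap.mkSpanSingleton'_apply, RingHom.id_apply, smul_eq_mul, map_smul_eq_mul]
    exact mul_le_mul_of_nonneg_right (le_abs_self c) (apply_nonneg p y)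
  obtain ⟨ℓ, hℓf, hℓp⟩ :=
    Module.Dual.exists_continuous_extension_of_le_seminorm_real _ f.toFun hp hfp
  exact ⟨ℓ, (hℓf ⟨y, hy⟩).trans (LinearPMap.mkSpanSingleton'_apply_self y (p y) H hy), hℓp⟩

theorem setIntegral_smul_set {G E : Type*} [Group G] [MeasurableSpace G] [MeasurableMul G]
    [NormedAddCommGroup E] [NormedSpace ℝ E] (μ : Measure G) [μ.IsMulLeftInvariant]
    (f : G → E) (g : G) (s : Set G) : ∫ v in g • s, f v ∂μ = ∫ v in s, f (g * v) ∂μ := by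
  rw [← image_smul]
  exact (measurePreserving_mul_left μ g).setIntegral_image_emb (measurableEmbedding_mulLeft g) f s

theorem ProbabilityTheory.integral_cond_eq_inv_mul_setIntegral {α : Type*} [MeasurableSpace α]
    (μ : Measure α) (s : Set α) (f : α → ℝ) :
    ∫ a, f a ∂μ[|s] = (μ s).toReal⁻¹ * ∫ a in s, f a ∂μ := by
  rw [cond, integral_smul_measure, ENNReal.toReal_inv, smul_eq_mul]

section Bounded

variable {E : Type*} [AddCommGroup E] [TopologicalSpace E] [Module ℝ E] [PolynormableSpace ℝ E]
  {s : Set E}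

theorem Bornology.IsVonNBounded.bddAbove_image_seminorm (hs : IsVonNBounded ℝ s)
    {p : Seminorm ℝ E} (hp : Continuous p) : BddAbove (p '' s) :=
  (PolynormableSpace.withSeminorms ℝ E).isVonNBounded_iff_seminorm_bddAbove.mp hs ⟨p, hp⟩

theorem Bornology.IsVonNBounded.integrable_clm_comp {α : Type*} [TopologicalSpace α]
    [MeasurableSpace α] [OpensMeasurableSpace α] {ν : Measure α} [IsFiniteMeasure ν]
    (hs : IsVonNBounded ℝ s) {u : α → E} (hu : Continuous u) (hus : ∀ a, u a ∈ s)
    (ℓ : E →L[ℝ] ℝ) : Integrable (fun a ↦ ℓ (u a)) ν := by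
  obtain ⟨B, hB⟩ := hs.bddAbove_image_seminorm (p := (normSeminorm ℝ ℝ).comp ℓ.toLinearMap)
    (continuous_norm.comp ℓ.continuous)
  exact .of_bound (ℓ.continuous.comp hu).aestronglyMeasurable B
    (ae_of_all _ fun a ↦ hB ⟨u a, hus a, rfl⟩)

end Bounded

theorem stmt14_general {G : Type*} [Group G] [TopologicalSpace G] [IsTopologicalGroup G]
    [MeasurableSpace G] [BorelSpace G]
    (μ : Measure G) [μ.IsHaarMeasure]
    {X : Type*} [AddCommGroup X] [UniformSpace X] [IsUniformAddGroup X]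
    [Module ℝ X] [ContinuousSMul ℝ X] [LocallyConvexSpace ℝ X]
    (C : Set X) (hconv : Convex ℝ C)
    (hbdd : Bornology.IsVonNBounded ℝ C)
    (ρ : G → X → X)
    (hmul : ∀ g h v, ρ (g * h) v = ρ g (ρ h v))
    (hmaps : ∀ g, Set.MapsTo (ρ g) C C)
    (hcont : Continuous fun p : G × C => ρ p.1 (p.2 : X))
    (haff : ∀ g, ∀ x ∈ C, ∀ y ∈ C, ∀ t : ℝ, t ∈ Set.Icc (0:ℝ) 1 →
      ρ g (t • x + (1 - t) • y) = t • ρ g x + (1 - t) • ρ g y)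
    (x : X) (hx : x ∈ C)
    (F : Set G) (hF : IsCompact F) (hFpos : 0 < μ F)
    (xF : X) (hxFC : xF ∈ C)
    (hxF : ∀ φ : X →L[ℝ] ℝ, φ xF = (μ F).toReal⁻¹ * ∫ g in F, φ (ρ g x) ∂μ)
    (γ : G) (q : Seminorm ℝ X) (hq : Continuous q) :
    BddAbove (Set.range fun v : G => q (ρ v x)) ∧
    q (xF - ρ γ xF) ≤
      ((μ ((γ • F) ∆ F)).toReal / (μ F).toReal) * ⨆ v : G, q (ρ v x) := by
  have horbit : ∀ g, ρ g x ∈ C := fun g ↦ hmaps g hx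
  have horbit_bdd : BddAbove (range fun v ↦ q (ρ v x)) :=
    (hbdd.bddAbove_image_seminorm hq).mono
      (range_subset_iff.2 fun v ↦ mem_image_of_mem q (horbit v))
  refine ⟨horbit_bdd, ?_⟩
  have hFfin : μ F ≠ ⊤ := hF.measure_lt_top.ne
  have := cond_isProbabilityMeasure_of_finite hFpos.ne' hFfin
  have hcx : Continuous fun g ↦ ρ g x :=
    hcont.comp (continuous_id.prodMk continuous_const : Continuous fun g : G ↦ (g, (⟨x, hx⟩ : C)))
  have hbar : ∀ ℓ : X →L[ℝ] ℝ, ℓ xF = ∫ g, ℓ (ρ g x) ∂μ[|F] := fun ℓ ↦ by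
    rw [integral_cond_eq_inv_mul_setIntegral, hxF]
  have hργ : ContinuousOn (ρ γ) C :=
    continuousOn_iff_continuous_domRestrict.2 (hcont.comp (Continuous.prodMk_right γ))
  obtain ⟨φ, hφ, hφq⟩ := q.exists_clm_apply_eq_of_continuous hq (xF - ρ γ xF)
  have htransl : φ (ρ γ xF) = (μ F).toReal⁻¹ * ∫ v in γ • F, φ (ρ v x) ∂μ := by
    refine (map_eq_integral_of_forall_clm_eq_integral hconv (φ.continuous.comp_continuousOn hργ)
      (fun y hy z hz t ht ↦ by simp [haff γ y hy z hz t ht]) (ae_of_all _ horbit)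
      (hbdd.integrable_clm_comp hcx horbit)
      (hbdd.integrable_clm_comp ((hcx.comp (continuous_const_mul γ)).congr fun g ↦ hmul γ g x)
        (fun g ↦ hmaps γ (horbit g)) φ) hxFC hbar).trans ?_
    simp only [integral_cond_eq_inv_mul_setIntegral, setIntegral_smul_set, Function.comp_apply,
      hmul]
  have hM : ∀ v, ‖φ (ρ v x)‖ ≤ ⨆ v, q (ρ v x) := fun v ↦ (hφq _).trans (le_ciSup horbit_bdd v)
  calc q (xF - ρ γ xF)
      = (μ F).toReal⁻¹ * (∫ v in F, φ (ρ v x) ∂μ - ∫ v in γ • F, φ (ρ v x) ∂μ) := by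
        rw [← hφ, map_sub, hbar, integral_cond_eq_inv_mul_setIntegral, htransl, mul_sub]
    _ ≤ (μ F).toReal⁻¹ * ((⨆ v, q (ρ v x)) * μ.real (F ∆ (γ • F))) := by
        gcongr
        exact (le_abs_self _).trans (norm_setIntegral_sub_setIntegral_le
          (φ.continuous.comp hcx).aestronglyMeasurable hM hFfin (by rwa [measure_smul]))
    _ = _ := by rw [symmDiff_comm, measureReal_def]; ring

/-- For a jointly continuous affine action of a locally compact group `G` on a complete
bounded convex subset `C` of a locally convex space, `x ∈ C`, and a compact `F ⊆ G` of
positive Haar measure, the barycenter `x_F ∈ C` (characterized weakly by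
`φ x_F = (μ F)⁻¹ ∫_F φ (g • x) dμ` for all continuous functionals `φ`) satisfies, for
every `γ ∈ G` and every continuous seminorm `q`,
`q (x_F - γ • x_F) ≤ (μ(γF ∆ F)/μ F) ⬝ sup_v q (v • x)`, the supremum being finite
since `C` is bounded. -/
theorem stmt14 {G : Type*} [Group G] [TopologicalSpace G] [IsTopologicalGroup G]
    [LocallyCompactSpace G] [MeasurableSpace G] [BorelSpace G]
    (μ : Measure G) [μ.IsHaarMeasure]
    {X : Type*} [AddCommGroup X] [UniformSpace X] [IsUniformAddGroup X]
    [Module ℝ X] [ContinuousSMul ℝ X] [LocallyConvexSpace ℝ X]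
    (C : Set X) (hconv : Convex ℝ C)
    (hbdd : Bornology.IsVonNBounded ℝ C) (hcompl : IsComplete C)
    (ρ : G → X → X) (hone : ∀ v, ρ 1 v = v)
    (hmul : ∀ g h v, ρ (g * h) v = ρ g (ρ h v))
    (hmaps : ∀ g, Set.MapsTo (ρ g) C C)
    (hcont : Continuous fun p : G × C => ρ p.1 (p.2 : X))
    (haff : ∀ g, ∀ x ∈ C, ∀ y ∈ C, ∀ t : ℝ, t ∈ Set.Icc (0:ℝ) 1 →
      ρ g (t • x + (1 - t) • y) = t • ρ g x + (1 - t) • ρ g y)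
    (x : X) (hx : x ∈ C)
    (F : Set G) (hF : IsCompact F) (hFpos : 0 < μ F)
    (xF : X) (hxFC : xF ∈ C)
    (hxF : ∀ φ : X →L[ℝ] ℝ, φ xF = (μ F).toReal⁻¹ * ∫ g in F, φ (ρ g x) ∂μ)
    (γ : G) (q : Seminorm ℝ X) (hq : Continuous q) :
    BddAbove (Set.range fun v : G => q (ρ v x)) ∧
    q (xF - ρ γ xF) ≤
      ((μ ((γ • F) ∆ F)).toReal / (μ F).toReal) * ⨆ v : G, q (ρ v x) :=
  stmt14_general μ C hconv hbdd ρ hmul hmaps hcont haff x hx F hF hFpos xF hxFC hxF γ q hq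
end

section
/- Let $G$ be a σ-compact, locally compact, amenable group acting jointly continuously by affine maps on a complete, bounded, convex subset $C$ of a metrizable locally convex space. Then there exists a sequence $(x_n)$ in $C$ such that $x_n - g x_n \to 0$ for all $g \in G$. -/
/-!
Fix `v ∈ C` and the orbit map `f h = ρ h v`. Given a compact `F` and a continuous seminorm `p`,
take a Følner set `K` for `F` inside a compact set and cut it into finitely many measurable
pieces `P i` whose points `w` satisfy `w⁻¹ * e i ∈ V`, where `V` is a neighbourhood of `1` on
which `f` is uniformly continuous over `K`. The point `x = ∑ i, (μ (P i) / μ K) • f (e i)` is a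
discretised average of `f` over `K`; since `ρ g` is affine, `ρ g x` is the same average over the
pieces `g • P i` of `g • K`. Pairing the mass of `P i ∩ g • P k` matches nearby orbit points,
and the unmatched mass `μ (g • K ∆ K)` is small while `p` is bounded on `C`, so `p (x - ρ g x)`
is small for all `g ∈ F`. Exhausting `G` by compact sets and `𝓝 0` by a countable basis turns
these approximate fixed points into a sequence.
-/

open scoped symmDiff Pointwise
open MeasureTheory Filter Topology Set Function Uniformity

section Convex

variable {E F ι : Type*} [AddCommGroup E] [Module ℝ E] [AddCommGroup F] [Module ℝ F]

theorem Convex.map_sum_smul_eq {C : Set E} (hC : Convex ℝ C) {T : E → F}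
    (hT : ∀ x ∈ C, ∀ y ∈ C, ∀ t : ℝ, t ∈ Set.Icc (0:ℝ) 1 →
      T (t • x + (1 - t) • y) = t • T x + (1 - t) • T y)
    {s : Finset ι} {w : ι → ℝ} {z : ι → E} (h₀ : ∀ i ∈ s, 0 ≤ w i) (h₁ : ∑ i ∈ s, w i = 1)
    (hz : ∀ i ∈ s, z i ∈ C) : T (∑ i ∈ s, w i • z i) = ∑ i ∈ s, w i • T (z i) := by
  have hgraph : Convex ℝ {q : E × F | q.1 ∈ C ∧ T q.1 = q.2} := by
    intro q hq q' hq' a b ha hb hab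
    refine ⟨hC hq.1 hq'.1 ha hb hab, ?_⟩
    obtain rfl : b = 1 - a := by linarith
    simp only [Prod.fst_add, Prod.smul_fst, Prod.snd_add, Prod.smul_snd, ← hq.2, ← hq'.2]
    exact hT _ hq.1 _ hq'.1 a ⟨ha, by linarith⟩
  have := (hgraph.sum_mem h₀ h₁ fun i hi => ⟨hz i hi, rfl⟩ :
    ∑ i ∈ s, w i • (z i, T (z i)) ∈ _).2
  simpa only [Prod.fst_sum, Prod.snd_sum, Prod.smul_fst, Prod.smul_snd] using this

end Convex

namespace Seminorm

variable {X ι : Type*} [AddCommGroup X] [Module ℝ X]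

theorem map_sum_smul_le (p : Seminorm ℝ X) {s : Finset ι} {a : ι → ℝ} (ha : ∀ i ∈ s, 0 ≤ a i)
    (z : ι → X) : p (∑ i ∈ s, a i • z i) ≤ ∑ i ∈ s, a i * p (z i) :=
  (Finset.le_sum_of_subadditive p (map_zero p).le (map_add_le_add p) _ _).trans_eq <|
    Finset.sum_congr rfl fun i hi => by rw [map_smul_eq_mul, Real.norm_of_nonneg (ha i hi)]

end Seminorm

section LocallyConvex

variable {X : Type*} [AddCommGroup X] [Module ℝ X] [TopologicalSpace X]

theorem Bornology.IsVonNBounded.exists_seminorm_le {C : Set X} (hC : IsVonNBounded ℝ C)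
    {p : Seminorm ℝ X} (hp : Continuous p) : ∃ M, ∀ x ∈ C, p x ≤ M := by
  obtain ⟨r, hr, hrC⟩ := (hC (p.ball_mem_nhds hp one_pos)).exists_pos
  refine ⟨r, fun x hx => ?_⟩
  have hx' := hrC r (by rw [Real.norm_of_nonneg hr.le]) hx
  rw [p.smul_ball_zero hr.ne', Seminorm.mem_ball_zero, Real.norm_of_nonneg hr.le, mul_one] at hx'
  exact hx'.le

theorem exists_continuous_seminorm_ball_subset [IsTopologicalAddGroup X] [ContinuousSMul ℝ X]
    [LocallyConvexSpace ℝ X] {W : Set X} (hW : W ∈ 𝓝 0) :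
    ∃ p : Seminorm ℝ X, Continuous p ∧ p.ball 0 1 ⊆ W := by
  obtain ⟨s, ⟨hs0, hso, hsc⟩, hsW⟩ := (nhds_hasBasis_absConvex_open ℝ X).mem_iff.1 hW
  let S : AbsConvexOpenSets ℝ X := ⟨s, hs0, hso, hsc⟩
  exact ⟨gaugeSeminormFamily ℝ X S, with_gaugeSeminormFamily.continuous_seminorm S,
    (gaugeSeminormFamily_ball S).trans_subset hsW⟩

end LocallyConvex

section Coupling

variable {α ι κ X : Type*} [MeasurableSpace α] {μ : Measure α} [Fintype ι] [Fintype κ]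

theorem measureReal_inter_iUnion_fintype {A : Set α} (hAm : MeasurableSet A) (hA : μ A ≠ ⊤)
    {R : κ → Set α} (hRm : ∀ k, MeasurableSet (R k)) (hRd : Pairwise (Disjoint on R)) :
    μ.real (A ∩ ⋃ k, R k) = ∑ k, μ.real (A ∩ R k) := by
  rw [inter_iUnion]
  exact measureReal_iUnion_fintype
    (fun k l hkl => (hRd hkl).mono inter_subset_right inter_subset_right)
    (fun k => hAm.inter (hRm k)) (fun k => measure_ne_top_of_subset inter_subset_left hA)

theorem measureReal_iUnion_sdiff_fintype {P : ι → Set α} (hPm : ∀ i, MeasurableSet (P i))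
    (hPd : Pairwise (Disjoint on P)) (hPfin : ∀ i, μ (P i) ≠ ⊤) {B : Set α}
    (hBm : MeasurableSet B) : μ.real ((⋃ i, P i) \ B) = ∑ i, μ.real (P i \ B) := by
  rw [iUnion_sdiff]
  exact measureReal_iUnion_fintype (fun i j hij => (hPd hij).mono sdiff_subset sdiff_subset)
    (fun i => (hPm i).diff hBm) (fun i => measure_ne_top_of_subset sdiff_subset (hPfin i))

theorem measure_iUnion_fintype_ne_top {P : ι → Set α} (hPfin : ∀ i, μ (P i) ≠ ⊤) :
    μ (⋃ i, P i) ≠ ⊤ :=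
  ((measure_iUnion_fintype_le μ P).trans_lt (ENNReal.sum_lt_top.2 fun i _ => (hPfin i).lt_top)).ne

variable [AddCommGroup X] [Module ℝ X]

theorem sum_measureReal_smul_sub_sum_measureReal_smul {P : ι → Set α} {R : κ → Set α}
    (hPm : ∀ i, MeasurableSet (P i)) (hRm : ∀ k, MeasurableSet (R k))
    (hPd : Pairwise (Disjoint on P)) (hRd : Pairwise (Disjoint on R))
    (hPfin : ∀ i, μ (P i) ≠ ⊤) (hRfin : ∀ k, μ (R k) ≠ ⊤) (x : ι → X) (y : κ → X) :
    ∑ i, μ.real (P i) • x i - ∑ k, μ.real (R k) • y k =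
      ∑ i, ∑ k, μ.real (P i ∩ R k) • (x i - y k) +
        (∑ i, μ.real (P i \ ⋃ k, R k) • x i - ∑ k, μ.real (R k \ ⋃ i, P i) • y k) := by
  have hPdec : ∀ i, μ.real (P i) = ∑ k, μ.real (P i ∩ R k) + μ.real (P i \ ⋃ k, R k) :=
    fun i => by
      rw [← measureReal_inter_iUnion_fintype (hPm i) (hPfin i) hRm hRd,
        measureReal_inter_add_sdiff (MeasurableSet.iUnion hRm) (hPfin i)]
  have hRdec : ∀ k, μ.real (R k) = ∑ i, μ.real (P i ∩ R k) + μ.real (R k \ ⋃ i, P i) :=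
    fun k => by
      simp_rw [inter_comm (P _)]
      rw [← measureReal_inter_iUnion_fintype (hRm k) (hRfin k) hPm hPd,
        measureReal_inter_add_sdiff (MeasurableSet.iUnion hPm) (hRfin k)]
  simp only [hPdec, hRdec, add_smul, Finset.sum_smul, smul_sub, Finset.sum_sub_distrib,
    Finset.sum_add_distrib]
  rw [Finset.sum_comm (f := fun i k => μ.real (P i ∩ R k) • y k)]
  abel

theorem Seminorm.sum_measureReal_smul_sub_le (p : Seminorm ℝ X) {P : ι → Set α}
    {R : κ → Set α} (hPm : ∀ i, MeasurableSet (P i)) (hRm : ∀ k, MeasurableSet (R k))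
    (hPd : Pairwise (Disjoint on P)) (hRd : Pairwise (Disjoint on R))
    (hPfin : ∀ i, μ (P i) ≠ ⊤) (hRfin : ∀ k, μ (R k) ≠ ⊤) {x : ι → X} {y : κ → X} {δ M : ℝ}
    (hxy : ∀ i k, (P i ∩ R k).Nonempty → p (x i - y k) ≤ δ) (hx : ∀ i, p (x i) ≤ M)
    (hy : ∀ k, p (y k) ≤ M) :
    p (∑ i, μ.real (P i) • x i - ∑ k, μ.real (R k) • y k) ≤
      μ.real ((⋃ i, P i) ∩ ⋃ k, R k) * δ + μ.real ((⋃ i, P i) ∆ ⋃ k, R k) * M := by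
  have hPUm : MeasurableSet (⋃ i, P i) := MeasurableSet.iUnion hPm
  have hRUm : MeasurableSet (⋃ k, R k) := MeasurableSet.iUnion hRm
  have hPUfin := measure_iUnion_fintype_ne_top hPfin
  have hRUfin := measure_iUnion_fintype_ne_top hRfin
  have hmatched : p (∑ i, ∑ k, μ.real (P i ∩ R k) • (x i - y k)) ≤
      μ.real ((⋃ i, P i) ∩ ⋃ k, R k) * δ := by
    rw [inter_comm, measureReal_inter_iUnion_fintype hRUm hRUfin hPm hPd, Finset.sum_mul]
    refine (Finset.le_sum_of_subadditive p (map_zero p).le (map_add_le_add p) _ _).trans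
      (Finset.sum_le_sum fun i _ => ?_)
    rw [inter_comm, measureReal_inter_iUnion_fintype (hPm i) (hPfin i) hRm hRd, Finset.sum_mul]
    refine (p.map_sum_smul_le (fun k _ => measureReal_nonneg) _).trans
      (Finset.sum_le_sum fun k _ => ?_)
    rcases (P i ∩ R k).eq_empty_or_nonempty with h | h
    · simp [h]
    · exact mul_le_mul_of_nonneg_left (hxy i k h) measureReal_nonneg
  have hunmatched :
      p (∑ i, μ.real (P i \ ⋃ k, R k) • x i - ∑ k, μ.real (R k \ ⋃ i, P i) • y k) ≤
        μ.real ((⋃ i, P i) \ ⋃ k, R k) * M + μ.real ((⋃ k, R k) \ ⋃ i, P i) * M := by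
    rw [measureReal_iUnion_sdiff_fintype hPm hPd hPfin hRUm,
      measureReal_iUnion_sdiff_fintype hRm hRd hRfin hPUm, Finset.sum_mul, Finset.sum_mul]
    refine (map_sub_le_add p _ _).trans (add_le_add ?_ ?_)
    · exact (p.map_sum_smul_le (fun i _ => measureReal_nonneg) _).trans
        (Finset.sum_le_sum fun i _ => mul_le_mul_of_nonneg_left (hx i) measureReal_nonneg)
    · exact (p.map_sum_smul_le (fun k _ => measureReal_nonneg) _).trans
        (Finset.sum_le_sum fun k _ => mul_le_mul_of_nonneg_left (hy k) measureReal_nonneg)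
  rw [sum_measureReal_smul_sub_sum_measureReal_smul hPm hRm hPd hRd hPfin hRfin,
    measureReal_symmDiff_eq hPUm hRUm hPUfin hRUfin, add_mul]
  exact (map_add_le_add p _ _).trans (add_le_add hmatched hunmatched)

end Coupling

theorem Continuous.eventually_forall_sub_mul_mem {G X : Type*} [Monoid G] [TopologicalSpace G]
    [ContinuousMul G] [AddCommGroup X] [UniformSpace X] [IsUniformAddGroup X] {f : G → X}
    (hf : Continuous f) {L : Set G} (hL : IsCompact L) {N : Set X} (hN : N ∈ 𝓝 0) :
    ∀ᶠ u in 𝓝 1, ∀ w ∈ L, f w - f (w * u) ∈ N := by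
  have hent : {q : X × X | q.2 - q.1 ∈ N} ∈ 𝓤 X := by
    rw [uniformity_eq_comap_nhds_zero X]
    exact preimage_mem_comap hN
  obtain ⟨v, hv, hvL⟩ := hL.mem_uniformity_of_prod (f := fun u w => f (w * u))
    (by fun_prop) (mem_univ 1) hent
  rw [nhdsWithin_univ] at hv
  filter_upwards [hv] with u hu w hw
  simpa using hvL u hu w hw

theorem Seminorm.map_sub_le_of_inv_mul_mem {G X : Type*} [Group G] [AddCommGroup X]
    [Module ℝ X] (p : Seminorm ℝ X) {f : G → X} {L V : Set G} {r : ℝ}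
    (hV : ∀ u ∈ V, ∀ w ∈ L, p (f w - f (w * u)) < r) {w a b : G} (hw : w ∈ L)
    (ha : w⁻¹ * a ∈ V) (hb : w⁻¹ * b ∈ V) : p (f a - f b) ≤ 2 * r := by
  have h₁ := hV _ ha w hw
  have h₂ := hV _ hb w hw
  rw [mul_inv_cancel_left] at h₁ h₂
  calc p (f a - f b) = p ((f w - f b) - (f w - f a)) := by congr 1; abel
    _ ≤ 2 * r := by linarith [map_sub_le_add p (f w - f b) (f w - f a)]

theorem exists_measurable_partition_inv_mul_mem {G : Type*} [Group G] [TopologicalSpace G]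
    [IsTopologicalGroup G] [MeasurableSpace G] [OpensMeasurableSpace G] {K L : Set G}
    (hK : MeasurableSet K) (hL : IsCompact L) (hKL : K ⊆ L) {V : Set G} (hV : V ∈ 𝓝 1) :
    ∃ (N : ℕ) (e : Fin N → G) (P : Fin N → Set G), (∀ i, MeasurableSet (P i)) ∧
      Pairwise (Disjoint on P) ∧ ⋃ i, P i = K ∧ ∀ i, ∀ w ∈ P i, w⁻¹ * e i ∈ V := by
  set O : G → Set G := fun e => (fun w => w⁻¹ * e) ⁻¹' interior V
  have hO : ∀ e, IsOpen (O e) := fun e => isOpen_interior.preimage (by fun_prop)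
  have hLO : L ⊆ ⋃ e, O e := fun e _ =>
    mem_iUnion.2 ⟨e, by simpa [O] using mem_interior_iff_mem_nhds.2 hV⟩
  obtain ⟨t, ht⟩ := hL.elim_finite_subcover O hO hLO
  let e : Fin t.card → G := fun i => t.equivFin.symm i
  have hKO : K ⊆ ⋃ i, O (e i) := by
    intro w hw
    obtain ⟨x, hx, hwx⟩ := mem_iUnion₂.1 (ht (hKL hw))
    exact mem_iUnion.2 ⟨t.equivFin ⟨x, hx⟩, by simpa [e] using hwx⟩
  refine ⟨t.card, e, disjointed fun i => K ∩ O (e i), fun i => ?_, disjoint_disjointed _, ?_,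
    fun i w hw => interior_subset (disjointed_subset _ i hw).2⟩
  · exact disjointedRec (fun s j hs => hs.diff (hK.inter (hO _).measurableSet))
      (hK.inter (hO _).measurableSet)
  · rw [iUnion_disjointed, ← inter_iUnion, inter_eq_left.2 hKO]

theorem MeasurableSet.exists_subset_isCompact_measureReal_sdiff_lt {α : Type*}
    [TopologicalSpace α] [R1Space α] [SigmaCompactSpace α] [MeasurableSpace α]
    [OpensMeasurableSpace α] {μ : Measure α} {U : Set α} (hUm : MeasurableSet U)
    (hU : μ U ≠ ⊤) {η : ℝ} (hη : 0 < η) :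
    ∃ K L : Set α, MeasurableSet K ∧ IsCompact L ∧ K ⊆ U ∧ K ⊆ L ∧ μ.real (U \ K) < η := by
  set L : ℕ → Set α := fun n => closure (compactCovering α n)
  have hLU : ⋃ n, U ∩ L n = U := by
    rw [← inter_iUnion, inter_eq_left]
    intro w _
    obtain ⟨m, hm⟩ := exists_mem_compactCovering w
    exact mem_iUnion.2 ⟨m, subset_closure hm⟩
  have hlim : Tendsto (fun n => μ.real (U ∩ L n)) atTop (𝓝 (μ.real U)) := by
    have := tendsto_measure_iUnion_atTop (μ := μ) fun m n hmn =>
      inter_subset_inter_right U (closure_mono (compactCovering_subset α hmn))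
    rw [hLU] at this
    exact (ENNReal.tendsto_toReal hU).comp this
  obtain ⟨n, hn⟩ := (hlim.eventually (lt_mem_nhds (sub_lt_self _ hη))).exists
  have hKm : MeasurableSet (U ∩ L n) := hUm.inter isClosed_closure.measurableSet
  refine ⟨U ∩ L n, L n, hKm, (isCompact_compactCovering α n).closure, inter_subset_left,
    inter_subset_right, ?_⟩
  rw [measureReal_sdiff inter_subset_left hKm hU]
  linarith

theorem measureReal_smul_symmDiff_le {G : Type*} [Group G] [MeasurableSpace G]
    {μ : Measure G} [μ.IsMulLeftInvariant] {K U : Set G} (hKU : K ⊆ U)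
    (hU : μ U ≠ ⊤) (g : G) :
    μ.real ((g • K) ∆ K) ≤ μ.real ((g • U) ∆ U) + 2 * μ.real (U \ K) := by
  have hsub : (g • K) ∆ K ⊆ (g • U) ∆ U ∪ U \ K ∪ g • (U \ K) := by
    have hgKU : g • K ⊆ g • U := smul_set_mono hKU
    rw [smul_set_sdiff]
    intro w hw
    simp only [mem_symmDiff, mem_union, Set.mem_sdiff] at hw ⊢
    have := @hgKU w
    have := @hKU w
    tauto
  have hUK : μ (U \ K) ≠ ⊤ := measure_ne_top_of_subset sdiff_subset hU
  have hfin : μ ((g • U) ∆ U ∪ U \ K ∪ g • (U \ K)) ≠ ⊤ :=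
    measure_union_ne_top (measure_union_ne_top
      (measure_symmDiff_ne_top (by rwa [measure_smul]) hU) hUK) (by rwa [measure_smul])
  have hgUK : μ.real (g • (U \ K)) = μ.real (U \ K) := by simp only [Measure.real, measure_smul]
  calc μ.real ((g • K) ∆ K)
      ≤ μ.real ((g • U) ∆ U) + μ.real (U \ K) + μ.real (g • (U \ K)) :=
        (measureReal_mono hsub hfin).trans
          ((measureReal_union_le _ _).trans (add_le_add_left (measureReal_union_le _ _) _))
    _ = μ.real ((g • U) ∆ U) + 2 * μ.real (U \ K) := by rw [hgUK]; ring

section Folner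

variable {G : Type*} [Group G] [TopologicalSpace G] [MeasurableSpace G]

def FolnerCondition (μ : Measure G) : Prop :=
  ∀ F : Set G, IsCompact F → ∀ ε : ℝ, 0 < ε →
    ∃ U : Set G, MeasurableSet U ∧ 0 < μ U ∧ μ U < ⊤ ∧
      ∀ x ∈ F, μ ((x • U) ∆ U) < ENNReal.ofReal ε * μ U

variable [IsTopologicalGroup G] [SigmaCompactSpace G] [BorelSpace G] {μ : Measure G}
  [μ.IsHaarMeasure]

theorem FolnerCondition.exists_measurableSet_subset_isCompact (hμ : FolnerCondition μ)
    {F : Set G} (hF : IsCompact F) {ε : ℝ} (hε : 0 < ε) :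
    ∃ K L : Set G, MeasurableSet K ∧ IsCompact L ∧ K ⊆ L ∧ 0 < μ.real K ∧
      ∀ g ∈ F, μ.real ((g • K) ∆ K) ≤ ε * μ.real K := by
  -- the error `ε' * μ U` of `U` plus twice the mass `< ε' * μ U` lost in `K` must stay below
  -- `ε * μ K`, where `μ K ≥ 3 / 4 * μ U`
  obtain ⟨ε', hε', hε'1, hε'ε⟩ : ∃ ε' : ℝ, 0 < ε' ∧ ε' ≤ 1 / 4 ∧ ε' ≤ ε / 4 :=
    ⟨min ε 1 / 4, by positivity, by linarith [min_le_right ε 1], by linarith [min_le_left ε 1]⟩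
  obtain ⟨U, hUm, hU0, hUfin, hUF⟩ := hμ F hF ε' hε'
  have hu : 0 < μ.real U := ENNReal.toReal_pos hU0.ne' hUfin.ne
  obtain ⟨K, L, hKm, hL, hKU, hKL, hUK⟩ :=
    hUm.exists_subset_isCompact_measureReal_sdiff_lt hUfin.ne (mul_pos hε' hu)
  rw [measureReal_sdiff hKU hKm hUfin.ne] at hUK
  have hK : 3 / 4 * μ.real U ≤ μ.real K := by nlinarith
  refine ⟨K, L, hKm, hL, hKL, by linarith, fun g hg => ?_⟩
  have hgU : μ.real ((g • U) ∆ U) < ε' * μ.real U := by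
    have := ENNReal.toReal_strict_mono (ENNReal.mul_lt_top ENNReal.ofReal_lt_top hUfin).ne
      (hUF g hg)
    rwa [ENNReal.toReal_mul, ENNReal.toReal_ofReal hε'.le] at this
  have := measureReal_smul_symmDiff_le (μ := μ) hKU hUfin.ne g
  rw [measureReal_sdiff hKU hKm hUfin.ne] at this
  nlinarith [mul_le_mul_of_nonneg_left hK hε.le, mul_le_mul_of_nonneg_right hε'ε hu.le]

end Folner

section Orbit

variable {G X : Type*} [Group G] [TopologicalSpace G] [IsTopologicalGroup G] [SigmaCompactSpace G]
  [MeasurableSpace G] [BorelSpace G] {μ : Measure G} [μ.IsHaarMeasure]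
  [AddCommGroup X] [UniformSpace X] [IsUniformAddGroup X] [Module ℝ X]

theorem FolnerCondition.exists_sum_smul_sub_le (hμ : FolnerCondition μ) {f : G → X}
    (hf : Continuous f) {p : Seminorm ℝ X} (hp : Continuous p) {M : ℝ} (hM : ∀ g, p (f g) ≤ M)
    {F : Set G} (hF : IsCompact F) {δ : ℝ} (hδ : 0 < δ) :
    ∃ (N : ℕ) (t : Fin N → ℝ) (e : Fin N → G), (∀ i, 0 ≤ t i) ∧ ∑ i, t i = 1 ∧
      ∀ g ∈ F, p (∑ i, t i • f (e i) - ∑ i, t i • f (g * e i)) ≤ δ := by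
  have hM0 : 0 ≤ M := (apply_nonneg p _).trans (hM 1)
  set ε := δ / (2 * (M + 1))
  obtain ⟨K, L, hKm, hL, hKL, hK0, hKF⟩ :=
    hμ.exists_measurableSet_subset_isCompact hF (ε := ε) (by positivity)
  have hKfin : μ K ≠ ⊤ := measure_ne_top_of_subset hKL hL.measure_lt_top.ne
  set V := {u : G | ∀ w ∈ L, f w - f (w * u) ∈ p.ball 0 (δ / 4)}
  have hV : V ∈ 𝓝 1 :=
    hf.eventually_forall_sub_mul_mem hL (p.ball_mem_nhds hp (by positivity : 0 < δ / 4))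
  obtain ⟨N, e, P, hPm, hPd, hPK, hPe⟩ := exists_measurable_partition_inv_mul_mem hKm hL hKL hV
  have hPfin : ∀ i, μ (P i) ≠ ⊤ := fun i =>
    measure_ne_top_of_subset (hPK ▸ subset_iUnion P i) hKfin
  have hPsum : ∑ i, μ.real (P i) = μ.real K := by
    rw [← measureReal_iUnion_fintype hPd hPm hPfin, hPK]
  refine ⟨N, fun i => μ.real (P i) / μ.real K, e, fun i => by positivity,
    by rw [← Finset.sum_div, hPsum, div_self hK0.ne'], fun g hg => ?_⟩
  have hclose : ∀ i k, (P i ∩ g • P k).Nonempty → p (f (e i) - f (g * e k)) ≤ 2 * (δ / 4) := by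
    rintro i k ⟨_, hwi, w, hwk, rfl⟩
    refine p.map_sub_le_of_inv_mul_mem (V := V) (fun u hu v hv => p.mem_ball_zero.1 (hu v hv))
      (hKL (hPK ▸ mem_iUnion_of_mem i hwi)) (hPe i _ hwi) ?_
    simpa [smul_eq_mul, mul_assoc] using hPe k _ hwk
  have hεM : ε * M ≤ δ / 2 := by
    rw [div_mul_eq_mul_div, div_le_div_iff₀ (by positivity) two_pos]
    nlinarith
  have hgP : ∀ k, μ.real (g • P k) = μ.real (P k) := fun k => by
    simp only [Measure.real, measure_smul]
  have hcoupling := p.sum_measureReal_smul_sub_le hPm (fun k => (hPm k).const_smul g) hPd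
    (fun i j hij => disjoint_smul_set.2 (hPd hij)) hPfin
    (fun k => by rw [measure_smul]; exact hPfin k) hclose (fun i => hM _) (fun k => hM _)
  rw [← smul_set_iUnion, hPK, symmDiff_comm] at hcoupling
  simp only [hgP] at hcoupling
  simp only [div_eq_inv_mul, mul_smul, ← Finset.smul_sum, ← smul_sub, map_smul_eq_mul,
    norm_inv, Real.norm_of_nonneg hK0.le]
  rw [inv_mul_le_iff₀ hK0]
  calc _ ≤ μ.real (K ∩ g • K) * (2 * (δ / 4)) + μ.real ((g • K) ∆ K) * M := hcoupling
    _ ≤ μ.real K * (2 * (δ / 4)) + (ε * μ.real K) * M := by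
      gcongr ?_ * _ + ?_ * _
      exacts [measureReal_mono inter_subset_left hKfin, hKF g hg]
    _ ≤ μ.real K * (δ / 2) + μ.real K * (δ / 2) := by nlinarith
    _ = μ.real K * δ := by ring

theorem FolnerCondition.exists_forall_sub_mem (hμ : FolnerCondition μ) [ContinuousSMul ℝ X]
    [LocallyConvexSpace ℝ X] {C : Set X} (hne : C.Nonempty) (hconv : Convex ℝ C)
    (hbdd : Bornology.IsVonNBounded ℝ C) (ρ : G → X → X)
    (hmul : ∀ g h v, ρ (g * h) v = ρ g (ρ h v)) (hmaps : ∀ g, Set.MapsTo (ρ g) C C)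
    (hcont : Continuous fun p : G × C => ρ p.1 (p.2 : X))
    (haff : ∀ g, ∀ x ∈ C, ∀ y ∈ C, ∀ t : ℝ, t ∈ Set.Icc (0:ℝ) 1 →
      ρ g (t • x + (1 - t) • y) = t • ρ g x + (1 - t) • ρ g y)
    {F : Set G} (hF : IsCompact F) {W : Set X} (hW : W ∈ 𝓝 0) :
    ∃ x ∈ C, ∀ g ∈ F, x - ρ g x ∈ W := by
  obtain ⟨v, hv⟩ := hne
  have hf : Continuous fun h => ρ h v :=
    hcont.comp (continuous_id.prodMk (continuous_const (y := (⟨v, hv⟩ : C))))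
  obtain ⟨p, hp, hpW⟩ := exists_continuous_seminorm_ball_subset hW
  obtain ⟨M, hM⟩ := hbdd.exists_seminorm_le hp
  obtain ⟨N, t, e, ht0, ht1, hte⟩ :=
    hμ.exists_sum_smul_sub_le hf hp (fun h => hM _ (hmaps h hv)) hF one_half_pos
  refine ⟨∑ i, t i • ρ (e i) v, hconv.sum_mem (fun i _ => ht0 i) ht1 fun i _ => hmaps _ hv,
    fun g hg => hpW ?_⟩
  rw [hconv.map_sum_smul_eq (haff g) (fun i _ => ht0 i) ht1 fun i _ => hmaps _ hv,
    Seminorm.mem_ball_zero]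
  simp only [← hmul]
  linarith [hte g hg]

end Orbit

theorem exists_seq_forall_tendsto_of_forall_isCompact {G α Y : Type*} [TopologicalSpace G]
    [SigmaCompactSpace G] [TopologicalSpace Y] {y : Y} [(𝓝 y).IsCountablyGenerated]
    {s : Set α} (D : G → α → Y) (h : ∀ F, IsCompact F → ∀ W ∈ 𝓝 y, ∃ x ∈ s, ∀ g ∈ F, D g x ∈ W) :
    ∃ x : ℕ → α, (∀ n, x n ∈ s) ∧ ∀ g, Tendsto (fun n => D g (x n)) atTop (𝓝 y) := by
  obtain ⟨B, hB⟩ := (𝓝 y).exists_antitone_basis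
  choose x hxs hx using fun n => h _ (isCompact_compactCovering G n) (B n) (hB.mem n)
  refine ⟨x, hxs, fun g => hB.tendsto_right_iff.2 fun m _ => ?_⟩
  obtain ⟨n₀, hn₀⟩ := exists_mem_compactCovering g
  filter_upwards [eventually_ge_atTop (max m n₀)] with n hn
  exact hB.antitone (le_of_max_le_left hn)
    (hx n g (compactCovering_subset G (le_of_max_le_right hn) hn₀))

theorem stmt15_general {G : Type*} [Group G] [TopologicalSpace G] [IsTopologicalGroup G]
    [SigmaCompactSpace G] [MeasurableSpace G] [BorelSpace G]
    (μ : Measure G) [μ.IsHaarMeasure]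
    (hFolner : ∀ F : Set G, IsCompact F → ∀ ε : ℝ, 0 < ε →
      ∃ U : Set G, MeasurableSet U ∧ 0 < μ U ∧ μ U < ⊤ ∧
        ∀ x ∈ F, μ ((x • U) ∆ U) < ENNReal.ofReal ε * μ U)
    {X : Type*} [AddCommGroup X] [UniformSpace X] [IsUniformAddGroup X]
    [Module ℝ X] [ContinuousSMul ℝ X] [LocallyConvexSpace ℝ X]
    [TopologicalSpace.MetrizableSpace X]
    (C : Set X) (hne : C.Nonempty) (hconv : Convex ℝ C)
    (hbdd : Bornology.IsVonNBounded ℝ C)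
    (ρ : G → X → X)
    (hmul : ∀ g h v, ρ (g * h) v = ρ g (ρ h v))
    (hmaps : ∀ g, Set.MapsTo (ρ g) C C)
    (hcont : Continuous fun p : G × C => ρ p.1 (p.2 : X))
    (haff : ∀ g, ∀ x ∈ C, ∀ y ∈ C, ∀ t : ℝ, t ∈ Set.Icc (0:ℝ) 1 →
      ρ g (t • x + (1 - t) • y) = t • ρ g x + (1 - t) • ρ g y) :
    ∃ x : ℕ → X, (∀ n, x n ∈ C) ∧
      ∀ g : G, Filter.Tendsto (fun n => x n - ρ g (x n)) Filter.atTop (nhds 0) :=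
  exists_seq_forall_tendsto_of_forall_isCompact (fun g x => x - ρ g x) fun _ hF _ hW =>
    FolnerCondition.exists_forall_sub_mem hFolner hne hconv hbdd ρ hmul hmaps hcont haff hF hW

/-- A σ-compact locally compact amenable group (amenability expressed via the Følner
condition over compact sets, w.r.t. left Haar measure) acting jointly continuously by
affine maps on a complete bounded convex subset `C` of a metrizable locally convex space
admits an approximate fixed point *sequence*. -/
theorem stmt15 {G : Type*} [Group G] [TopologicalSpace G] [IsTopologicalGroup G]
    [LocallyCompactSpace G] [SigmaCompactSpace G] [MeasurableSpace G] [BorelSpace G]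
    (μ : Measure G) [μ.IsHaarMeasure]
    (hFolner : ∀ F : Set G, IsCompact F → ∀ ε : ℝ, 0 < ε →
      ∃ U : Set G, MeasurableSet U ∧ 0 < μ U ∧ μ U < ⊤ ∧
        ∀ x ∈ F, μ ((x • U) ∆ U) < ENNReal.ofReal ε * μ U)
    {X : Type*} [AddCommGroup X] [UniformSpace X] [IsUniformAddGroup X]
    [Module ℝ X] [ContinuousSMul ℝ X] [LocallyConvexSpace ℝ X]
    [TopologicalSpace.MetrizableSpace X]
    (C : Set X) (hne : C.Nonempty) (hconv : Convex ℝ C)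
    (hbdd : Bornology.IsVonNBounded ℝ C) (hcompl : IsComplete C)
    (ρ : G → X → X) (hone : ∀ v, ρ 1 v = v)
    (hmul : ∀ g h v, ρ (g * h) v = ρ g (ρ h v))
    (hmaps : ∀ g, Set.MapsTo (ρ g) C C)
    (hcont : Continuous fun p : G × C => ρ p.1 (p.2 : X))
    (haff : ∀ g, ∀ x ∈ C, ∀ y ∈ C, ∀ t : ℝ, t ∈ Set.Icc (0:ℝ) 1 →
      ρ g (t • x + (1 - t) • y) = t • ρ g x + (1 - t) • ρ g y) :
    ∃ x : ℕ → X, (∀ n, x n ∈ C) ∧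
      ∀ g : G, Filter.Tendsto (fun n => x n - ρ g (x n)) Filter.atTop (nhds 0) :=
  stmt15_general μ hFolner C hne hconv hbdd ρ hmul hmaps hcont haff
end
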